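/- arXiv:2111.12633 — 4 statements merged into one kernel-verified Lean document; each statement's English description precedes it below -/
import Mathlib

section
/- Let 0 < ε ≤ 1, α > 0, m > 0, T > 0. Suppose the linear system Σ(ε,m,T) is stable, i.e. every solution of Σ(ε,m,T) with positive initial data tends to (0,0) as t → ∞. Then every solution (x₁, x₂) of the density-dependent system D(ε,α,m,T) with x₁(0) ≥ 0 and x₂(0) ≥ 0 satisfies x₁(t) → 0 and x₂(t) → 0 as t → ∞. -/
open Real Filter Set

/-- The `2T`-periodic square wave: `+1` on `[0,T)`, `-1` on `[T,2T)`. -/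
noncomputable def squareWave (T t : ℝ) : ℝ :=
  if Int.fract (t / (2 * T)) < 1 / 2 then 1 else -1

/-- A solution of the switched system `F(m,T)`: a continuous function satisfying
`dV/dt = 2(u(t) - m sinh V)` away from the switching times `nT`, `n ∈ ℤ`. -/
def IsSolF (m T : ℝ) (V : ℝ → ℝ) : Prop :=
  Continuous V ∧ ∀ t : ℝ, (∀ n : ℤ, t ≠ n * T) →
    HasDerivAt V (2 * (squareWave T t - m * Real.sinh (V t))) t

/-- A solution of the planar switched linear system `Σ(ε,m,T)`. -/
def IsSolSigma (ε m T : ℝ) (x₁ x₂ : ℝ → ℝ) : Prop :=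
  Continuous x₁ ∧ Continuous x₂ ∧ ∀ t : ℝ, (∀ n : ℤ, t ≠ n * T) →
    HasDerivAt x₁ ((squareWave T t - ε) * x₁ t + m * (x₂ t - x₁ t)) t ∧
    HasDerivAt x₂ ((-squareWave T t - ε) * x₂ t + m * (x₁ t - x₂ t)) t

/-- A solution of the density-dependent switched system `D(ε,α,m,T)`. -/
def IsSolD (ε α m T : ℝ) (x₁ x₂ : ℝ → ℝ) : Prop :=
  Continuous x₁ ∧ Continuous x₂ ∧ ∀ t : ℝ, (∀ n : ℤ, t ≠ n * T) →
    HasDerivAt x₁ ((squareWave T t - ε) * x₁ t - α * (x₁ t) ^ 2 + m * (x₂ t - x₁ t)) t ∧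
    HasDerivAt x₂ ((-squareWave T t - ε) * x₂ t - α * (x₂ t) ^ 2 + m * (x₁ t - x₂ t)) t

/-!
Let `y` solve `Σ(ε,m,T)` with `y(0) = x(0) + (1,1)`. Both systems are cooperative: away from
the switching times, `wᵢ' ≥ cᵢ(t) wᵢ + m wⱼ` with `m ≥ 0` and `cᵢ` locally bounded holds for
`w = x` (put the logistic term into `cᵢ`) and for `w = y - x` (drop `α xᵢ² ≥ 0`). For such
inequalities nonnegativity of `w(0)` propagates forward, interval by interval, by a first-exit
argument. Hence `0 ≤ x ≤ y` for `t ≥ 0`, and stability of `Σ` squeezes `x` to `0`.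

The solution `y` is built from operator exponentials: the flow over one period `[0, 2T]`,
continued to all of `ℝ` by integer powers of the monodromy operator.
-/

section Cooperative

lemma monotoneOn_exp_mul_mul_of_neg_mul_le_deriv {v v' : ℝ → ℝ} {a c K : ℝ}
    (hv : ContinuousOn v (Icc a c)) (hd : ∀ t ∈ Ioo a c, HasDerivAt v (v' t) t)
    (hK : ∀ t ∈ Ioo a c, -K * v t ≤ v' t) :
    MonotoneOn (fun t => exp (K * t) * v t) (Icc a c) := by
  refine monotoneOn_of_hasDerivWithinAt_nonneg (f' := fun t => exp (K * t) * (K * v t + v' t))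
    (convex_Icc a c) ((continuous_exp.comp (continuous_const_mul K)).continuousOn.mul hv) ?_ ?_
  · rw [interior_Icc]
    intro t ht
    have hexp : HasDerivAt (fun t => exp (K * t)) (exp (K * t) * K) t := by
      simpa using ((hasDerivAt_id t).const_mul K).exp
    exact ((hexp.mul (hd t ht)).congr_deriv (by ring)).hasDerivWithinAt
  · rw [interior_Icc]
    intro t ht
    exact mul_nonneg (exp_pos _).le (by linarith [hK t ht])

variable {a b K m : ℝ} {w₁ w₂ w₁' w₂' c₁ c₂ : ℝ → ℝ}

/-- First-exit argument: at the first time `t₀` where a component vanishes, both were positive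
on `[a, t₀)`, so `exp (K t) wᵢ t` increased there and `wᵢ t₀ > 0`. -/
lemma pos_of_neg_mul_le_deriv (hw₁ : ContinuousOn w₁ (Icc a b)) (hw₂ : ContinuousOn w₂ (Icc a b))
    (hd₁ : ∀ t ∈ Ioo a b, HasDerivAt w₁ (w₁' t) t) (hd₂ : ∀ t ∈ Ioo a b, HasDerivAt w₂ (w₂' t) t)
    (hK₁ : ∀ t ∈ Ioo a b, 0 < w₁ t → 0 < w₂ t → -K * w₁ t ≤ w₁' t)
    (hK₂ : ∀ t ∈ Ioo a b, 0 < w₁ t → 0 < w₂ t → -K * w₂ t ≤ w₂' t)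
    (h₁ : 0 < w₁ a) (h₂ : 0 < w₂ a) : ∀ t ∈ Icc a b, 0 < w₁ t ∧ 0 < w₂ t := by
  by_contra! hneg
  set S := Icc a b ∩ w₁ ⁻¹' Iic 0 ∪ Icc a b ∩ w₂ ⁻¹' Iic 0
  have hS : IsCompact S := isCompact_Icc.of_isClosed_subset
    ((hw₁.preimage_isClosed_of_isClosed isClosed_Icc isClosed_Iic).union
      (hw₂.preimage_isClosed_of_isClosed isClosed_Icc isClosed_Iic))
    (union_subset inter_subset_left inter_subset_left)
  obtain ⟨t, ht, ht'⟩ := hneg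
  obtain ⟨t₀, ht₀S, ht₀⟩ := hS.exists_isLeast
    (show S.Nonempty from ⟨t, by by_cases h : w₁ t ≤ 0 <;> simp_all [S]⟩)
  have ht₀ab : t₀ ∈ Icc a b := by rcases ht₀S with h | h <;> exact h.1
  have hat₀ : a < t₀ := by
    refine ht₀ab.1.lt_of_ne ?_
    rintro rfl
    rcases ht₀S with h | h
    · exact (not_le.2 h₁) h.2
    · exact (not_le.2 h₂) h.2
  have hpos : ∀ s ∈ Ico a t₀, 0 < w₁ s ∧ 0 < w₂ s := by
    intro s hs
    by_contra! h
    have hsS : s ∈ S := by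
      have hsab : s ∈ Icc a b := ⟨hs.1, hs.2.le.trans ht₀ab.2⟩
      by_cases h' : w₁ s ≤ 0
      · exact Or.inl ⟨hsab, h'⟩
      · exact Or.inr ⟨hsab, h (not_le.1 h')⟩
    exact (not_le.2 hs.2) (ht₀ hsS)
  have hsub : Icc a t₀ ⊆ Icc a b := Icc_subset_Icc_right ht₀ab.2
  have hsub' : Ioo a t₀ ⊆ Ioo a b := Ioo_subset_Ioo_right ht₀ab.2
  have pos_at_exit : ∀ {v v' : ℝ → ℝ}, ContinuousOn v (Icc a b) →
      (∀ t ∈ Ioo a b, HasDerivAt v (v' t) t) →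
      (∀ t ∈ Ioo a t₀, -K * v t ≤ v' t) → 0 < v a → 0 < v t₀ := by
    intro v v' hv hd hK hva
    have hmono := monotoneOn_exp_mul_mul_of_neg_mul_le_deriv (hv.mono hsub)
      (fun t ht => hd t (hsub' ht)) hK
      (left_mem_Icc.2 hat₀.le) (right_mem_Icc.2 hat₀.le) hat₀.le
    exact pos_of_mul_pos_right ((mul_pos (exp_pos _) hva).trans_le hmono) (exp_pos _).le
  have hw₁t₀ : 0 < w₁ t₀ := pos_at_exit hw₁ hd₁
    (fun s hs => hK₁ s (hsub' hs) (hpos s ⟨hs.1.le, hs.2⟩).1 (hpos s ⟨hs.1.le, hs.2⟩).2) h₁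
  have hw₂t₀ : 0 < w₂ t₀ := pos_at_exit hw₂ hd₂
    (fun s hs => hK₂ s (hsub' hs) (hpos s ⟨hs.1.le, hs.2⟩).1 (hpos s ⟨hs.1.le, hs.2⟩).2) h₂
  rcases ht₀S with h | h
  · exact (not_le.2 hw₁t₀) h.2
  · exact (not_le.2 hw₂t₀) h.2

lemma nonneg_of_cooperative (hm : 0 ≤ m)
    (hc₁ : ∀ t ∈ Ioo a b, |c₁ t| ≤ K) (hc₂ : ∀ t ∈ Ioo a b, |c₂ t| ≤ K)
    (hw₁ : ContinuousOn w₁ (Icc a b)) (hw₂ : ContinuousOn w₂ (Icc a b))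
    (hd₁ : ∀ t ∈ Ioo a b, HasDerivAt w₁ (w₁' t) t) (hd₂ : ∀ t ∈ Ioo a b, HasDerivAt w₂ (w₂' t) t)
    (hineq₁ : ∀ t ∈ Ioo a b, c₁ t * w₁ t + m * w₂ t ≤ w₁' t)
    (hineq₂ : ∀ t ∈ Ioo a b, c₂ t * w₂ t + m * w₁ t ≤ w₂' t)
    (h₁ : 0 ≤ w₁ a) (h₂ : 0 ≤ w₂ a) : ∀ t ∈ Icc a b, 0 ≤ w₁ t ∧ 0 ≤ w₂ t := by
  intro t ht
  -- `δ e^{(K+m)s}` turns the cooperative inequality into one with strictly positive data.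
  have hpert : ∀ δ > 0, 0 < w₁ t + δ * exp ((K + m) * t) ∧ 0 < w₂ t + δ * exp ((K + m) * t) := by
    intro δ hδ
    set p : ℝ → ℝ := fun s => δ * exp ((K + m) * s)
    have hp : ∀ s, HasDerivAt p ((K + m) * p s) s := fun s => by
      have := (((hasDerivAt_id s).const_mul (K + m)).exp).const_mul δ
      exact this.congr_deriv (by simp only [p, id]; ring)
    have hp₀ : ∀ s, 0 < p s := fun s => mul_pos hδ (exp_pos _)
    refine pos_of_neg_mul_le_deriv (K := K) (w₁ := fun s => w₁ s + p s)
      (w₂ := fun s => w₂ s + p s) (w₁' := fun s => w₁' s + (K + m) * p s)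
      (w₂' := fun s => w₂' s + (K + m) * p s) (hw₁.add (by fun_prop)) (hw₂.add (by fun_prop))
      (fun s hs => (hd₁ s hs).add (hp s)) (fun s hs => (hd₂ s hs).add (hp s)) ?_ ?_
      (add_pos_of_nonneg_of_pos h₁ (hp₀ a)) (add_pos_of_nonneg_of_pos h₂ (hp₀ a)) t ht
    · intro s hs hv₁ hv₂
      have hc := abs_le.1 (hc₁ s hs)
      nlinarith [hineq₁ s hs, mul_nonneg (by linarith : 0 ≤ c₁ s + K) hv₁.le,
        mul_nonneg hm hv₂.le, mul_nonneg (by linarith : 0 ≤ K - c₁ s) (hp₀ s).le]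
    · intro s hs hv₁ hv₂
      have hc := abs_le.1 (hc₂ s hs)
      nlinarith [hineq₂ s hs, mul_nonneg (by linarith : 0 ≤ c₂ s + K) hv₂.le,
        mul_nonneg hm hv₁.le, mul_nonneg (by linarith : 0 ≤ K - c₂ s) (hp₀ s).le]
  have hlim : ∀ ε > 0, 0 < w₁ t + ε ∧ 0 < w₂ t + ε := fun ε hε => by
    simpa [div_mul_cancel₀ _ (exp_pos _).ne'] using hpert (ε / exp ((K + m) * t)) (by positivity)
  exact ⟨le_of_forall_pos_lt_add fun ε hε => (hlim ε hε).1,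
    le_of_forall_pos_lt_add fun ε hε => (hlim ε hε).2⟩

lemma forall_nonneg_of_Icc_steps {P : ℝ → Prop} {T : ℝ} (hT : 0 < T) (h0 : P 0)
    (hstep : ∀ k : ℕ, P (k * T) → ∀ t ∈ Icc (k * T) ((k + 1) * T), P t) :
    ∀ t, 0 ≤ t → P t := by
  have hk : ∀ k : ℕ, P (k * T) := by
    intro k
    induction k with
    | zero => simpa using h0
    | succ k ih => exact_mod_cast hstep k ih ((k + 1) * T) ⟨by nlinarith, le_rfl⟩
  intro t ht
  refine hstep ⌊t / T⌋₊ (hk _) t ⟨?_, ?_⟩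
  · exact (le_div_iff₀ hT).1 (Nat.floor_le (div_nonneg ht hT.le))
  · exact ((div_lt_iff₀ hT).1 (Nat.lt_floor_add_one (t / T))).le

lemma ne_int_mul_of_mem_Ioo {T t : ℝ} {k : ℤ} (hT : 0 < T) (ht : t ∈ Ioo (k * T) ((k + 1) * T))
    (n : ℤ) : t ≠ n * T := by
  rintro rfl
  have h₁ : (k : ℝ) < n := lt_of_mul_lt_mul_right ht.1 hT.le
  have h₂ : (n : ℝ) < k + 1 := lt_of_mul_lt_mul_right ht.2 hT.le
  norm_cast at h₁ h₂
  omega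

lemma nonneg_of_cooperative_off_switching {T : ℝ} (hT : 0 < T) (hm : 0 ≤ m)
    (hw₁ : Continuous w₁) (hw₂ : Continuous w₂)
    (hc : ∀ k : ℕ, ∃ K, ∀ t ∈ Ioo (k * T) ((k + 1) * T), |c₁ t| ≤ K ∧ |c₂ t| ≤ K)
    (hd : ∀ t, (∀ n : ℤ, t ≠ n * T) →
      HasDerivAt w₁ (w₁' t) t ∧ HasDerivAt w₂ (w₂' t) t ∧
      c₁ t * w₁ t + m * w₂ t ≤ w₁' t ∧ c₂ t * w₂ t + m * w₁ t ≤ w₂' t)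
    (h₁ : 0 ≤ w₁ 0) (h₂ : 0 ≤ w₂ 0) : ∀ t, 0 ≤ t → 0 ≤ w₁ t ∧ 0 ≤ w₂ t := by
  refine forall_nonneg_of_Icc_steps hT ⟨h₁, h₂⟩ fun k hk => ?_
  obtain ⟨K, hK⟩ := hc k
  have hoff : ∀ t ∈ Ioo (k * T) ((k + 1) * T), ∀ n : ℤ, t ≠ n * T := fun t ht =>
    ne_int_mul_of_mem_Ioo (k := k) hT (by exact_mod_cast ht)
  exact nonneg_of_cooperative hm (fun t ht => (hK t ht).1) (fun t ht => (hK t ht).2)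
    hw₁.continuousOn hw₂.continuousOn (fun t ht => (hd t (hoff t ht)).1)
    (fun t ht => (hd t (hoff t ht)).2.1) (fun t ht => (hd t (hoff t ht)).2.2.1)
    (fun t ht => (hd t (hoff t ht)).2.2.2) hk.1 hk.2

end Cooperative

section FloorGlue

variable {X : Type*} {P : ℝ} {g : ℤ → ℝ → X}

lemma eqOn_floor_div_glue (hP : 0 < P)
    (hg : ∀ n : ℤ, g n ((n + 1) * P) = g (n + 1) ((n + 1) * P)) (n : ℤ) :
    EqOn (fun t => g ⌊t / P⌋ t) (g n) (Icc (n * P) ((n + 1) * P)) := by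
  rintro t ⟨h₁, h₂⟩
  rcases h₂.lt_or_eq with h₂ | rfl
  · have : ⌊t / P⌋ = n := Int.floor_eq_iff.2 ⟨(le_div_iff₀ hP).2 h₁, (div_lt_iff₀ hP).2 h₂⟩
    simp only [this]
  · have : ⌊((n : ℝ) + 1) * P / P⌋ = n + 1 := by
      rw [mul_div_cancel_right₀ _ hP.ne']; exact_mod_cast Int.floor_intCast (n + 1)
    simp only [this, hg n]

lemma continuous_floor_div_glue [TopologicalSpace X] (hP : 0 < P) (hc : ∀ n, Continuous (g n))
    (hg : ∀ n : ℤ, g n ((n + 1) * P) = g (n + 1) ((n + 1) * P)) :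
    Continuous fun t => g ⌊t / P⌋ t := by
  refine LocallyFinite.continuous (f := fun n : ℤ => Icc (n * P) ((n + 1) * P)) ?_ ?_
    (fun _ => isClosed_Icc) fun n => ((hc n).continuousOn).congr (eqOn_floor_div_glue hP hg n)
  · refine locallyFinite_Icc_of_tendsto ?_ ?_
    · exact tendsto_intCast_atTop_atTop.atTop_mul_const hP
    · exact (tendsto_atBot_add_const_right _ 1
        (tendsto_intCast_atBot_iff.2 tendsto_id)).atBot_mul_const hP
  · refine eq_univ_of_forall fun t => mem_iUnion.2 ⟨⌊t / P⌋, ?_, ?_⟩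
    · exact (le_div_iff₀ hP).1 (Int.floor_le _)
    · exact ((div_lt_iff₀ hP).1 (Int.lt_floor_add_one _)).le

end FloorGlue

section SwitchedFlow

open NormedSpace

variable {E : Type*} [NormedAddCommGroup E] [NormedSpace ℝ E] (A B : E →L[ℝ] E) (T : ℝ)

noncomputable def periodFlow (s : ℝ) : E →L[ℝ] E :=
  if s ≤ T then exp (s • A) else exp ((s - T) • B) * exp (T • A)

lemma periodFlow_zero (hT : 0 ≤ T) : periodFlow A B T 0 = 1 := by
  simp [periodFlow, hT]

variable [CompleteSpace E]

lemma isUnit_exp_continuousLinearMap (C : E →L[ℝ] E) : IsUnit (exp C) :=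
  -- `exp` does not depend on which `ℚ`-algebra structure is used.
  letI := NormedAlgebra.restrictScalars ℚ ℝ (E →L[ℝ] E)
  isUnit_exp C

noncomputable def monodromy : (E →L[ℝ] E)ˣ :=
  (isUnit_exp_continuousLinearMap (T • B)).unit *
    (isUnit_exp_continuousLinearMap (T • A)).unit

noncomputable def switchedFlowPiece (n : ℤ) (t : ℝ) : E →L[ℝ] E :=
  periodFlow A B T (t - n * (2 * T)) * ↑(monodromy A B T ^ n)

/-- The fundamental solution of the `2T`-periodic system that follows `x' = A x` on
`[2nT, (2n+1)T]` and `x' = B x` on `[(2n+1)T, (2n+2)T]`; the monodromy is taken as a unit so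
that its powers also cover the periods with `n < 0`. -/
noncomputable def switchedFlow (t : ℝ) : E →L[ℝ] E :=
  switchedFlowPiece A B T ⌊t / (2 * T)⌋ t

lemma continuous_exp_smul (C : E →L[ℝ] E) : Continuous fun s : ℝ => exp (s • C) :=
  (differentiable_exp_smul_const ℝ C).continuous

lemma continuous_periodFlow : Continuous (periodFlow A B T) :=
  Continuous.if_le (continuous_exp_smul A)
    (((continuous_exp_smul B).comp (continuous_sub_right T)).mul continuous_const)
    continuous_id continuous_const fun s hs => by simp [hs]

lemma periodFlow_two_mul (hT : 0 < T) : periodFlow A B T (2 * T) = ↑(monodromy A B T) := by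
  rw [periodFlow, if_neg (by linarith), show 2 * T - T = T by ring]
  simp [monodromy]

lemma hasDerivAt_periodFlow_of_lt {s : ℝ} (hs : s < T) :
    HasDerivAt (periodFlow A B T) (A * periodFlow A B T s) s := by
  have h : periodFlow A B T =ᶠ[nhds s] fun s => exp (s • A) :=
    eventually_of_mem (Iio_mem_nhds hs) fun r hr => if_pos (le_of_lt hr)
  rw [h.eq_of_nhds]
  exact (hasDerivAt_exp_smul_const' A s).congr_of_eventuallyEq h

lemma hasDerivAt_periodFlow_of_gt {s : ℝ} (hs : T < s) :
    HasDerivAt (periodFlow A B T) (B * periodFlow A B T s) s := by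
  have h : periodFlow A B T =ᶠ[nhds s] fun s => exp ((s - T) • B) * exp (T • A) :=
    eventually_of_mem (Ioi_mem_nhds hs) fun r hr => if_neg (not_le.2 hr)
  rw [h.eq_of_nhds, ← mul_assoc]
  exact (((hasDerivAt_exp_smul_const' B (s - T)).comp_sub_const s T).mul_const _
    ).congr_of_eventuallyEq h

lemma switchedFlowPiece_succ (hT : 0 < T) (n : ℤ) :
    switchedFlowPiece A B T n ((n + 1) * (2 * T)) =
      switchedFlowPiece A B T (n + 1) ((n + 1) * (2 * T)) := by
  rw [switchedFlowPiece, switchedFlowPiece, Int.cast_add, Int.cast_one, sub_self,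
    show ((n : ℝ) + 1) * (2 * T) - n * (2 * T) = 2 * T by ring, periodFlow_two_mul A B T hT,
    periodFlow_zero A B T hT.le, one_mul, ← Units.val_mul, ← zpow_one_add, add_comm]

lemma continuous_switchedFlow (hT : 0 < T) : Continuous (switchedFlow A B T) :=
  continuous_floor_div_glue (by positivity)
    (fun n => ((continuous_periodFlow A B T).comp (continuous_sub_right _)).mul continuous_const)
    (switchedFlowPiece_succ A B T hT)

lemma switchedFlow_zero (hT : 0 < T) : switchedFlow A B T 0 = 1 := by
  simp [switchedFlow, switchedFlowPiece, periodFlow_zero A B T hT.le]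

lemma hasDerivAt_switchedFlow (hT : 0 < T) {t : ℝ} (ht : ∀ n : ℤ, t ≠ n * T) :
    HasDerivAt (switchedFlow A B T)
      ((if Int.fract (t / (2 * T)) < 1 / 2 then A else B) * switchedFlow A B T t) t := by
  set n := ⌊t / (2 * T)⌋
  set s := t - n * (2 * T)
  have hs : s = 2 * T * Int.fract (t / (2 * T)) := by
    rw [Int.fract]; field_simp; ring
  have hs₀ : 0 < s := by
    refine (hs ▸ mul_nonneg (by positivity) (Int.fract_nonneg _)).lt_of_ne fun h => ?_
    exact ht (2 * n) (by push_cast; linarith)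
  have hs₂ : s < 2 * T := by
    rw [hs]; nlinarith [Int.fract_lt_one (t / (2 * T))]
  have hsT : s ≠ T := fun h => ht (2 * n + 1) (by push_cast; linarith)
  have hloc : switchedFlow A B T =ᶠ[nhds t] switchedFlowPiece A B T n :=
    eventually_of_mem (Ioo_mem_nhds (by linarith) (by linarith))
      fun r hr => eqOn_floor_div_glue (by positivity) (switchedFlowPiece_succ A B T hT) n
        ⟨hr.1.le, hr.2.le⟩
  have hpiece : ∀ C, HasDerivAt (periodFlow A B T) (C * periodFlow A B T s) s →
      HasDerivAt (switchedFlow A B T) (C * switchedFlow A B T t) t := fun C hC => by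
    rw [hloc.eq_of_nhds, switchedFlowPiece, ← mul_assoc]
    exact ((hC.comp_sub_const t _).mul_const _).congr_of_eventuallyEq hloc
  have hfract : Int.fract (t / (2 * T)) < 1 / 2 ↔ s < T := by
    rw [hs]; constructor <;> intro h <;> nlinarith
  split_ifs with h
  · exact hpiece A (hasDerivAt_periodFlow_of_lt A B T (hfract.1 h))
  · exact hpiece B (hasDerivAt_periodFlow_of_gt A B T
      ((not_lt.1 (mt hfract.2 h)).lt_of_ne hsT.symm))

end SwitchedFlow

section Sigma

variable {ε α m T : ℝ} {x₁ x₂ y₁ y₂ : ℝ → ℝ}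

noncomputable def sigmaField (ε m σ : ℝ) : ℝ × ℝ →L[ℝ] ℝ × ℝ :=
  ((σ - ε - m) • ContinuousLinearMap.fst ℝ ℝ ℝ + m • ContinuousLinearMap.snd ℝ ℝ ℝ).prod
    (m • ContinuousLinearMap.fst ℝ ℝ ℝ + (-σ - ε - m) • ContinuousLinearMap.snd ℝ ℝ ℝ)

lemma sigmaField_apply (ε m σ : ℝ) (w : ℝ × ℝ) :
    sigmaField ε m σ w =
      ((σ - ε) * w.1 + m * (w.2 - w.1), (-σ - ε) * w.2 + m * (w.1 - w.2)) := by
  ext <;> simp [sigmaField] <;> ring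

lemma exists_isSolSigma (ε m : ℝ) (hT : 0 < T) (v : ℝ × ℝ) :
    ∃ y₁ y₂ : ℝ → ℝ, IsSolSigma ε m T y₁ y₂ ∧ y₁ 0 = v.1 ∧ y₂ 0 = v.2 := by
  set X := switchedFlow (sigmaField ε m 1) (sigmaField ε m (-1)) T
  have hy : Continuous fun t => X t v :=
    (continuous_switchedFlow _ _ T hT).clm_apply continuous_const
  have hX₀ : X 0 = 1 := switchedFlow_zero _ _ T hT
  refine ⟨fun t => (X t v).1, fun t => (X t v).2,
    ⟨continuous_fst.comp hy, continuous_snd.comp hy, fun t ht => ?_⟩,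
    by simp [hX₀], by simp [hX₀]⟩
  have hd : HasDerivAt (fun t => X t v) (sigmaField ε m (squareWave T t) (X t v)) t := by
    refine ((hasDerivAt_switchedFlow _ _ T hT ht).clm_apply
      (hasDerivAt_const t v)).congr_deriv ?_
    unfold squareWave
    split_ifs <;> simp [X]
  have h₁ := (ContinuousLinearMap.fst ℝ ℝ ℝ).hasFDerivAt.comp_hasDerivAt t hd
  have h₂ := (ContinuousLinearMap.snd ℝ ℝ ℝ).hasFDerivAt.comp_hasDerivAt t hd
  simp only [sigmaField_apply] at h₁ h₂
  exact ⟨h₁, h₂⟩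

lemma abs_squareWave_le_one (T t : ℝ) : |squareWave T t| ≤ 1 := by
  unfold squareWave
  split_ifs <;> norm_num

lemma abs_sub_sub_le_of_abs_le_one {σ : ℝ} (ε m : ℝ) (hσ : |σ| ≤ 1) :
    |σ - ε - m| ≤ 1 + |ε| + |m| :=
  calc |σ - ε - m| ≤ |σ| + |ε| + |m| := (abs_sub _ _).trans (by gcongr; exact abs_sub _ _)
    _ ≤ 1 + |ε| + |m| := by linarith

lemma IsSolD.nonneg (hm : 0 ≤ m) (hT : 0 < T) (hx : IsSolD ε α m T x₁ x₂)
    (h₁ : 0 ≤ x₁ 0) (h₂ : 0 ≤ x₂ 0) : ∀ t, 0 ≤ t → 0 ≤ x₁ t ∧ 0 ≤ x₂ t := by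
  obtain ⟨hc₁, hc₂, hd⟩ := hx
  refine nonneg_of_cooperative_off_switching (c₁ := fun t => squareWave T t - ε - m - α * x₁ t)
    (c₂ := fun t => -squareWave T t - ε - m - α * x₂ t)
    (w₁' := fun t => (squareWave T t - ε) * x₁ t - α * x₁ t ^ 2 + m * (x₂ t - x₁ t))
    (w₂' := fun t => (-squareWave T t - ε) * x₂ t - α * x₂ t ^ 2 + m * (x₁ t - x₂ t))
    hT hm hc₁ hc₂ (fun k => ?_) (fun t ht => ?_) h₁ h₂
  · obtain ⟨C, hC⟩ := isCompact_Icc.exists_bound_of_continuousOn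
      ((hc₁.prodMk hc₂).continuousOn (s := Icc (k * T) ((k + 1) * T)))
    have hbound : ∀ σ x, |σ| ≤ 1 → |x| ≤ C →
        |σ - ε - m - α * x| ≤ 1 + |ε| + |m| + |α| * C := fun σ x hσ hx =>
      (abs_sub _ _).trans (add_le_add (abs_sub_sub_le_of_abs_le_one ε m hσ)
        (by rw [abs_mul]; gcongr))
    refine ⟨_, fun t ht => ⟨hbound _ _ (abs_squareWave_le_one T t) ?_,
      hbound _ _ ((abs_neg _).trans_le (abs_squareWave_le_one T t)) ?_⟩⟩
    · exact (le_max_left _ _).trans (hC t (Ioo_subset_Icc_self ht))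
    · exact (le_max_right _ _).trans (hC t (Ioo_subset_Icc_self ht))
  · obtain ⟨hd₁, hd₂⟩ := hd t ht
    exact ⟨hd₁, hd₂, le_of_eq (by ring), le_of_eq (by ring)⟩

lemma IsSolD.le_of_isSolSigma (hα : 0 ≤ α) (hm : 0 ≤ m) (hT : 0 < T)
    (hx : IsSolD ε α m T x₁ x₂) (hy : IsSolSigma ε m T y₁ y₂)
    (h₁ : x₁ 0 ≤ y₁ 0) (h₂ : x₂ 0 ≤ y₂ 0) : ∀ t, 0 ≤ t → x₁ t ≤ y₁ t ∧ x₂ t ≤ y₂ t := by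
  obtain ⟨hxc₁, hxc₂, hxd⟩ := hx
  obtain ⟨hyc₁, hyc₂, hyd⟩ := hy
  have hw := nonneg_of_cooperative_off_switching (w₁ := fun t => y₁ t - x₁ t)
    (w₂ := fun t => y₂ t - x₂ t) (c₁ := fun t => squareWave T t - ε - m)
    (c₂ := fun t => -squareWave T t - ε - m)
    (w₁' := fun t => (squareWave T t - ε) * y₁ t + m * (y₂ t - y₁ t) -
      ((squareWave T t - ε) * x₁ t - α * x₁ t ^ 2 + m * (x₂ t - x₁ t)))
    (w₂' := fun t => (-squareWave T t - ε) * y₂ t + m * (y₁ t - y₂ t) -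
      ((-squareWave T t - ε) * x₂ t - α * x₂ t ^ 2 + m * (x₁ t - x₂ t)))
    hT hm (hyc₁.sub hxc₁) (hyc₂.sub hxc₂)
    (fun _ => ⟨_, fun t _ => ⟨abs_sub_sub_le_of_abs_le_one ε m (abs_squareWave_le_one T t),
      abs_sub_sub_le_of_abs_le_one ε m ((abs_neg _).trans_le (abs_squareWave_le_one T t))⟩⟩)
    (fun t ht => ?_) (sub_nonneg.2 h₁) (sub_nonneg.2 h₂)
  · exact fun t ht => ⟨sub_nonneg.1 (hw t ht).1, sub_nonneg.1 (hw t ht).2⟩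
  · obtain ⟨hx₁, hx₂⟩ := hxd t ht
    obtain ⟨hy₁, hy₂⟩ := hyd t ht
    refine ⟨hy₁.sub hx₁, hy₂.sub hx₂, ?_, ?_⟩
    · nlinarith [mul_nonneg hα (sq_nonneg (x₁ t))]
    · nlinarith [mul_nonneg hα (sq_nonneg (x₂ t))]

end Sigma

theorem statement16_general (ε α m T : ℝ) (hα : 0 < α)
    (hm : 0 < m) (hT : 0 < T)
    (hstab : ∀ x₁ x₂ : ℝ → ℝ, IsSolSigma ε m T x₁ x₂ → 0 < x₁ 0 → 0 < x₂ 0 →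
      Filter.Tendsto x₁ Filter.atTop (nhds 0) ∧
      Filter.Tendsto x₂ Filter.atTop (nhds 0)) :
    ∀ x₁ x₂ : ℝ → ℝ, IsSolD ε α m T x₁ x₂ → 0 ≤ x₁ 0 → 0 ≤ x₂ 0 →
      Filter.Tendsto x₁ Filter.atTop (nhds 0) ∧
      Filter.Tendsto x₂ Filter.atTop (nhds 0) := by
  intro x₁ x₂ hx h₁ h₂
  obtain ⟨y₁, y₂, hy, hy₁, hy₂⟩ := exists_isSolSigma ε m hT (x₁ 0 + 1, x₂ 0 + 1)
  have hx_nonneg := hx.nonneg hm.le hT h₁ h₂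
  have hx_le := hx.le_of_isSolSigma hα.le hm.le hT hy (by linarith) (by linarith)
  obtain ⟨hy₁_lim, hy₂_lim⟩ := hstab y₁ y₂ hy (by linarith) (by linarith)
  have h₀ : ∀ᶠ t in atTop, (0 : ℝ) ≤ t := eventually_ge_atTop 0
  exact ⟨tendsto_of_tendsto_of_tendsto_of_le_of_le' tendsto_const_nhds hy₁_lim
      (h₀.mono fun t ht => (hx_nonneg t ht).1) (h₀.mono fun t ht => (hx_le t ht).1),
    tendsto_of_tendsto_of_tendsto_of_le_of_le' tendsto_const_nhds hy₂_lim
      (h₀.mono fun t ht => (hx_nonneg t ht).2) (h₀.mono fun t ht => (hx_le t ht).2)⟩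

theorem statement16 (ε α m T : ℝ) (hε : 0 < ε) (hε1 : ε ≤ 1) (hα : 0 < α)
    (hm : 0 < m) (hT : 0 < T)
    (hstab : ∀ x₁ x₂ : ℝ → ℝ, IsSolSigma ε m T x₁ x₂ → 0 < x₁ 0 → 0 < x₂ 0 →
      Filter.Tendsto x₁ Filter.atTop (nhds 0) ∧
      Filter.Tendsto x₂ Filter.atTop (nhds 0)) :
    ∀ x₁ x₂ : ℝ → ℝ, IsSolD ε α m T x₁ x₂ → 0 ≤ x₁ 0 → 0 ≤ x₂ 0 →
      Filter.Tendsto x₁ Filter.atTop (nhds 0) ∧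
      Filter.Tendsto x₂ Filter.atTop (nhds 0) :=
  statement16_general ε α m T hα hm hT hstab
end

section
/- Let 0 < ε ≤ 1, α > 0, m > 0, T > 0. Suppose the linear system Σ(ε,m,T) is unstable, i.e. Δ(ε,m,T) > 0. Then the density-dependent system D(ε,α,m,T) is uniformly persistent: there exist strictly positive constants a < b such that every solution (x₁, x₂) of D(ε,α,m,T) with x₁(0) > 0 and x₂(0) > 0 satisfies a ≤ x₁(t) ≤ b and a ≤ x₂(t) ≤ b for all sufficiently large t. -/
open Real Filter Set

/-- The quantity `Δ(ε,m,T)` associated with the periodic solution `P` of `F(m,T)`. -/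
noncomputable def DeltaP (ε m T : ℝ) (P : ℝ → ℝ) : ℝ :=
  (1 / (2 * T)) * ∫ s in (0:ℝ)..(2 * T), 2 * (m * Real.cosh (P s) - m - ε)

/-!
Put `G t = ∫₀ᵗ (m cosh P - m - ε)`. The gauge `y₁ = x₁ e^{-(G + P/2)}`, `y₂ = x₂ e^{-(G - P/2)}`
absorbs the linear part of `D(ε,α,m,T)` (this is where `P' = 2(u - m sinh P)` enters) and leaves
the cooperative system `y₁' = m e^{-P} (y₂ - y₁) - α e^{G + P/2} y₁²`,
`y₂' = m e^{P} (y₁ - y₂) - α e^{G - P/2} y₂²`. Since `G t - (Δ/2) t` is periodic, the quadratic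
coefficients are comparable to `e^{Δ t / 2}`, and comparison with the explicit solutions
`(A + B (e^{Δ t / 2} - 1))⁻¹` of `z' = -B (Δ/2) e^{Δ t / 2} z²` traps `y_i e^{Δ t / 2}` for large
`t` between positive constants that do not depend on the solution; undoing the gauge gives the
bounds for `x_i`.
-/

open Topology

theorem le_of_hasDerivAt_of_eq_of_lt_left {f g : ℝ → ℝ} {f' g' r s : ℝ}
    (hf : HasDerivAt f f' s) (hg : HasDerivAt g g' s) (hfg : f s = g s) (hrs : r < s)
    (hlt : ∀ t ∈ Ioo r s, f t < g t) : g' ≤ f' := by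
  have hslope : Tendsto (slope (f - g) s) (𝓝[<] s) (𝓝 (f' - g')) :=
    (hasDerivAt_iff_tendsto_slope.mp (hf.sub hg)).mono_left
      (nhdsWithin_mono s fun t ht => ne_of_lt ht)
  have : 0 ≤ f' - g' := ge_of_tendsto hslope <| by
    filter_upwards [Ioo_mem_nhdsLT hrs] with t ht
    rw [slope_def_field, Pi.sub_apply, Pi.sub_apply, hfg, sub_self, sub_zero]
    exact (div_pos_of_neg_of_neg (sub_neg.mpr (hlt t ht)) (sub_neg.mpr ht.2)).le
  linarith

theorem exists_first_zero {f : ℝ → ℝ} {a b : ℝ} (hab : a ≤ b) (hf : ContinuousOn f (Icc a b))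
    (ha : f a < 0) (hb : 0 ≤ f b) : ∃ s ∈ Ioc a b, f s = 0 ∧ ∀ t ∈ Ico a s, f t < 0 := by
  set U := Icc a b ∩ f ⁻¹' Ici 0
  have hU : IsClosed U := hf.preimage_isClosed_of_isClosed isClosed_Icc isClosed_Ici
  have hUbdd : BddBelow U := ⟨a, fun t ht => ht.1.1⟩
  obtain ⟨⟨has, hsb⟩, hfs⟩ : sInf U ∈ U := hU.csInf_mem ⟨b, ⟨hab, le_rfl⟩, hb⟩ hUbdd
  have hbefore : ∀ t ∈ Ico a (sInf U), f t < 0 := fun t ht =>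
    not_le.mp fun h => (csInf_le hUbdd ⟨⟨ht.1, ht.2.le.trans hsb⟩, h⟩).not_gt ht.2
  obtain ⟨r, hr, hfr⟩ := intermediate_value_Icc has (hf.mono (Icc_subset_Icc_right hsb))
    ⟨ha.le, hfs⟩
  have hrs : r = sInf U :=
    le_antisymm hr.2 (csInf_le hUbdd ⟨⟨hr.1, hr.2.trans hsb⟩, hfr.symm.le⟩)
  refine ⟨sInf U, ⟨has.lt_of_ne fun h => ha.not_ge ?_, hsb⟩, hrs ▸ hfr, hbefore⟩
  rw [h]
  exact hfs

section Comparison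

variable {S : Set ℝ} {y₁ y₂ dy₁ dy₂ : ℝ → ℝ} {Z dZ : ℝ → ℝ → ℝ}
  (hy₁ : Continuous y₁) (hy₂ : Continuous y₂)
  (hdy₁ : ∀ s ∉ S, HasDerivAt y₁ (dy₁ s) s) (hdy₂ : ∀ s ∉ S, HasDerivAt y₂ (dy₂ s) s)
  (hZ : ∀ c ∈ Ioo (0 : ℝ) 1, ContinuousOn (Z c) (Ici 0))
  (hdZ : ∀ c ∈ Ioo (0 : ℝ) 1, ∀ s, 0 < s → HasDerivAt (Z c) (dZ c s) s)
  (hinit : ∀ c ∈ Ioo (0 : ℝ) 1, y₁ 0 < Z c 0 ∧ y₂ 0 < Z c 0)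
  (hcontact₁ : ∀ c ∈ Ioo (0 : ℝ) 1, ∀ s, 0 < s → s ∉ S →
    y₁ s = Z c s → y₂ s ≤ Z c s → dy₁ s < dZ c s)
  (hcontact₂ : ∀ c ∈ Ioo (0 : ℝ) 1, ∀ s, 0 < s → s ∉ S →
    y₂ s = Z c s → y₁ s ≤ Z c s → dy₂ s < dZ c s)
include hy₁ hy₂ hdy₁ hdy₂ hZ hdZ hinit hcontact₁ hcontact₂

theorem exists_mem_contact_of_not_lt_barrier {c t : ℝ} (hc : c ∈ Ioo (0 : ℝ) 1) (ht : 0 ≤ t)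
    (hcross : ¬(y₁ t < Z c t ∧ y₂ t < Z c t)) :
    ∃ s ∈ S ∩ Ioi 0, y₁ s = Z c s ∨ y₂ s = Z c s := by
  set f := fun t => max (y₁ t - Z c t) (y₂ t - Z c t)
  have hf : ContinuousOn f (Icc 0 t) :=
    (ContinuousOn.sup (hy₁.continuousOn.sub (hZ c hc)) (hy₂.continuousOn.sub (hZ c hc))).mono
      Icc_subset_Ici_self
  have hf0 : f 0 < 0 := max_lt (sub_neg.mpr (hinit c hc).1) (sub_neg.mpr (hinit c hc).2)
  have hft : 0 ≤ f t := by
    by_contra h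
    exact hcross ⟨sub_neg.mp (lt_of_le_of_lt (le_max_left _ _) (not_le.mp h)),
      sub_neg.mp (lt_of_le_of_lt (le_max_right _ _) (not_le.mp h))⟩
  obtain ⟨s, ⟨hs0, -⟩, hfs, hbefore⟩ := exists_first_zero ht hf hf0 hft
  have hle₁ : y₁ s ≤ Z c s := sub_nonpos.mp (hfs ▸ le_max_left _ _)
  have hle₂ : y₂ s ≤ Z c s := sub_nonpos.mp (hfs ▸ le_max_right _ _)
  have hlt₁ : ∀ r ∈ Ioo 0 s, y₁ r < Z c r := fun r hr =>
    sub_neg.mp ((le_max_left _ _).trans_lt (hbefore r (Ioo_subset_Ico_self hr)))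
  have hlt₂ : ∀ r ∈ Ioo 0 s, y₂ r < Z c r := fun r hr =>
    sub_neg.mp ((le_max_right _ _).trans_lt (hbefore r (Ioo_subset_Ico_self hr)))
  have heq : y₁ s = Z c s ∨ y₂ s = Z c s := by
    rcases max_choice (y₁ s - Z c s) (y₂ s - Z c s) with h | h
    · exact Or.inl (sub_eq_zero.mp (h ▸ hfs))
    · exact Or.inr (sub_eq_zero.mp (h ▸ hfs))
  refine ⟨s, ⟨?_, hs0⟩, heq⟩
  by_contra hsS
  rcases heq with heq | heq
  · exact (hcontact₁ c hc s hs0 hsS heq hle₂).not_ge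
      (le_of_hasDerivAt_of_eq_of_lt_left (hdy₁ s hsS) (hdZ c hc s hs0) heq hs0 hlt₁)
  · exact (hcontact₂ c hc s hs0 hsS heq hle₁).not_ge
      (le_of_hasDerivAt_of_eq_of_lt_left (hdy₂ s hsS) (hdZ c hc s hs0) heq hs0 hlt₂)

/-- Comparison principle off a countable set: each barrier `Z c` can only be touched at
points of `S`, and a contact point determines `c`, so a crossing of `Z c₀` would produce
countably many contact points for the uncountably many `c < c₀`. -/
theorem lt_barrier_of_countable (hS : S.Countable)
    (hmono : ∀ t, 0 ≤ t → StrictMonoOn (fun c => Z c t) (Ioo (0 : ℝ) 1))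
    {c t : ℝ} (hc : c ∈ Ioo (0 : ℝ) 1) (ht : 0 ≤ t) : y₁ t < Z c t ∧ y₂ t < Z c t := by
  by_contra hcross
  have hcover : Ioo 0 c ⊆ ⋃ s ∈ S ∩ Ioi 0,
      ({c' ∈ Ioo (0 : ℝ) 1 | y₁ s = Z c' s} ∪ {c' ∈ Ioo (0 : ℝ) 1 | y₂ s = Z c' s}) := by
    intro c' hc'
    have hc'1 : c' ∈ Ioo (0 : ℝ) 1 := ⟨hc'.1, hc'.2.trans hc.2⟩
    have hcross' : ¬(y₁ t < Z c' t ∧ y₂ t < Z c' t) := fun h =>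
      hcross ⟨h.1.trans (hmono t ht hc'1 hc hc'.2), h.2.trans (hmono t ht hc'1 hc hc'.2)⟩
    obtain ⟨s, hs, heq⟩ := exists_mem_contact_of_not_lt_barrier hy₁ hy₂ hdy₁ hdy₂ hZ hdZ hinit
      hcontact₁ hcontact₂ hc'1 ht hcross'
    exact mem_biUnion hs (heq.imp (fun h => ⟨hc'1, h⟩) (fun h => ⟨hc'1, h⟩))
  have hfiber : ∀ s ∈ S ∩ Ioi 0, ∀ y : ℝ, {c' ∈ Ioo (0 : ℝ) 1 | y = Z c' s}.Countable :=
    fun s hs y => Set.Subsingleton.countable fun a ha b hb =>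
      (hmono s (le_of_lt hs.2)).injOn ha.1 hb.1 (ha.2.symm.trans hb.2)
  have hcount : (Ioo 0 c).Countable :=
    ((hS.mono inter_subset_left).biUnion fun s hs =>
      (hfiber s hs (y₁ s)).union (hfiber s hs (y₂ s))).mono hcover
  exact (Cardinal.Real.Ioo_countable_iff.mp hcount).not_gt hc.1

end Comparison

/-- The solution `z(0) = A⁻¹` of the Riccati equation `z' = -B δ e^{δt} z²`. -/
noncomputable def expBarrier (δ B A t : ℝ) : ℝ := (A + B * (exp (δ * t) - 1))⁻¹

section ExpBarrier

variable {δ B A t : ℝ}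

theorem expBarrier_denom_pos (hδ : 0 ≤ δ) (hB : 0 ≤ B) (hA : 0 < A) (ht : 0 ≤ t) :
    0 < A + B * (exp (δ * t) - 1) := by
  have : 1 ≤ exp (δ * t) := one_le_exp (mul_nonneg hδ ht)
  positivity

theorem expBarrier_pos (hδ : 0 ≤ δ) (hB : 0 ≤ B) (hA : 0 < A) (ht : 0 ≤ t) :
    0 < expBarrier δ B A t :=
  inv_pos.mpr (expBarrier_denom_pos hδ hB hA ht)

theorem expBarrier_zero : expBarrier δ B A 0 = A⁻¹ := by
  simp only [expBarrier, mul_zero, exp_zero, sub_self, add_zero]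

theorem continuousOn_expBarrier (hδ : 0 ≤ δ) (hB : 0 ≤ B) (hA : 0 < A) :
    ContinuousOn (expBarrier δ B A) (Ici 0) :=
  ContinuousOn.inv₀ (by fun_prop) fun t ht => (expBarrier_denom_pos hδ hB hA ht).ne'

theorem hasDerivAt_expBarrier (hδ : 0 ≤ δ) (hB : 0 ≤ B) (hA : 0 < A) (ht : 0 ≤ t) :
    HasDerivAt (expBarrier δ B A) (-(B * δ * exp (δ * t)) * expBarrier δ B A t ^ 2) t := by
  have hlin : HasDerivAt (fun t => A + B * (exp (δ * t) - 1)) (B * (exp (δ * t) * δ)) t :=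
    ((((hasDerivAt_id t).const_mul δ).exp.sub_const 1).const_mul B).const_add A |>.congr_deriv
      (by simp)
  refine (hlin.inv (expBarrier_denom_pos hδ hB hA ht).ne').congr_deriv ?_
  rw [expBarrier, div_eq_mul_inv, inv_pow]
  ring

theorem expBarrier_lt_expBarrier {A' : ℝ} (hδ : 0 ≤ δ) (hB : 0 ≤ B) (hA : 0 < A) (ht : 0 ≤ t)
    (hAA' : A < A') : expBarrier δ B A' t < expBarrier δ B A t :=
  inv_strictAnti₀ (expBarrier_denom_pos hδ hB hA ht) (by linarith)

theorem expBarrier_mul_exp_le (hB : 0 < B) (hA : 0 ≤ A) (ht : 2 ≤ exp (δ * t)) :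
    expBarrier δ B A t * exp (δ * t) ≤ 2 / B := by
  have hsplit : (A + B * (exp (δ * t) - 1)) * (2 / B) = 2 * A / B + 2 * (exp (δ * t) - 1) := by
    field_simp
  have : 0 ≤ 2 * A / B := by positivity
  rw [expBarrier, inv_mul_le_iff₀ (by nlinarith), hsplit]
  linarith

theorem inv_two_mul_le_expBarrier_mul_exp (hB : 0 < B) (hA : 0 < A) (he : 1 ≤ exp (δ * t))
    (hAe : A ≤ B * exp (δ * t)) : (2 * B)⁻¹ ≤ expBarrier δ B A t * exp (δ * t) := by
  have hden : 0 < A + B * (exp (δ * t) - 1) := by nlinarith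
  rw [expBarrier, ← div_eq_inv_mul, le_div_iff₀ hden, inv_mul_le_iff₀ (by positivity)]
  nlinarith

end ExpBarrier

theorem mul_sub_sub_mul_sq_lt {a b β w z : ℝ} (ha : 0 ≤ a) (hw : w ≤ z) (hz : 0 < z)
    (hβ : β < b) : a * (w - z) - b * z ^ 2 < -β * z ^ 2 := by
  nlinarith [mul_nonpos_of_nonneg_of_nonpos ha (sub_nonpos.mpr hw),
    mul_lt_mul_of_pos_right hβ (pow_pos hz 2)]

theorem neg_mul_sq_lt_mul_sub_sub_mul_sq {a b β w z : ℝ} (ha : 0 ≤ a) (hw : z ≤ w) (hz : 0 < z)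
    (hβ : b < β) : -β * z ^ 2 < a * (w - z) - b * z ^ 2 := by
  nlinarith [mul_nonneg ha (sub_nonneg.mpr hw), mul_lt_mul_of_pos_right hβ (pow_pos hz 2)]

theorem eventually_le_exp_mul {δ : ℝ} (hδ : 0 < δ) (R : ℝ) : ∀ᶠ t in atTop, R ≤ exp (δ * t) :=
  (tendsto_exp_atTop.comp (tendsto_id.const_mul_atTop hδ)).eventually_ge_atTop R

section Cooperative

variable {S : Set ℝ} {δ : ℝ} {a₁ a₂ b₁ b₂ y₁ y₂ : ℝ → ℝ}
  (hS : S.Countable) (hδ : 0 < δ) (hy₁ : Continuous y₁) (hy₂ : Continuous y₂)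
  (hy₁' : ∀ s ∉ S, HasDerivAt y₁ (a₁ s * (y₂ s - y₁ s) - b₁ s * y₁ s ^ 2) s)
  (hy₂' : ∀ s ∉ S, HasDerivAt y₂ (a₂ s * (y₁ s - y₂ s) - b₂ s * y₂ s ^ 2) s)
  (ha₁ : ∀ s, 0 ≤ a₁ s) (ha₂ : ∀ s, 0 ≤ a₂ s)
include hS hδ hy₁ hy₂ hy₁' hy₂' ha₁ ha₂

/-- The barrier is the member `c = 1/2` of the family `expBarrier δ B ((2 - c) / (2 Y))`,
`0 < c < 1`, all of which start above `Y`. -/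
theorem lt_expBarrier_of_cooperative {B Y t : ℝ} (hB : 0 < B)
    (hb₁ : ∀ s, B * δ * exp (δ * s) < b₁ s) (hb₂ : ∀ s, B * δ * exp (δ * s) < b₂ s)
    (hY : 0 < Y) (hy₀ : y₁ 0 ≤ Y ∧ y₂ 0 ≤ Y) (ht : 0 ≤ t) :
    y₁ t < expBarrier δ B (3 / (4 * Y)) t ∧ y₂ t < expBarrier δ B (3 / (4 * Y)) t := by
  set A := fun c : ℝ => (2 - c) / (2 * Y)
  have hA : ∀ c ∈ Ioo (0 : ℝ) 1, 0 < A c := fun c hc => div_pos (by linarith [hc.2]) (by positivity)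
  have hZpos : ∀ c ∈ Ioo (0 : ℝ) 1, ∀ s, 0 ≤ s → 0 < expBarrier δ B (A c) s := fun c hc s hs =>
    expBarrier_pos hδ.le hB.le (hA c hc) hs
  have hinit : ∀ c ∈ Ioo (0 : ℝ) 1,
      y₁ 0 < expBarrier δ B (A c) 0 ∧ y₂ 0 < expBarrier δ B (A c) 0 := by
    intro c hc
    have hYZ : Y < expBarrier δ B (A c) 0 := by
      rw [expBarrier_zero, inv_div, lt_div_iff₀ (by linarith [hc.2])]
      nlinarith [hc.1]
    exact ⟨hy₀.1.trans_lt hYZ, hy₀.2.trans_lt hYZ⟩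
  have h := lt_barrier_of_countable (Z := fun c => expBarrier δ B (A c)) hy₁ hy₂ hy₁' hy₂'
    (fun c hc => continuousOn_expBarrier hδ.le hB.le (hA c hc))
    (fun c hc s hs => hasDerivAt_expBarrier hδ.le hB.le (hA c hc) hs.le) hinit
    (fun c hc s hs _ heq hle => by
      rw [heq]
      exact mul_sub_sub_mul_sq_lt (ha₁ s) hle (hZpos c hc s hs.le) (hb₁ s))
    (fun c hc s hs _ heq hle => by
      rw [heq]
      exact mul_sub_sub_mul_sq_lt (ha₂ s) hle (hZpos c hc s hs.le) (hb₂ s))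
    hS (fun t ht c hc c' hc' hcc' => expBarrier_lt_expBarrier hδ.le hB.le (hA c' hc') ht
      (div_lt_div_of_pos_right (by linarith) (by positivity)))
    (c := 1 / 2) ⟨by norm_num, by norm_num⟩ ht
  have hA₀ : A (1 / 2) = 3 / (4 * Y) := by norm_num [A]; ring
  rwa [hA₀] at h

/-- The comparison principle applied to `-y₁, -y₂` and the family
`-expBarrier δ C ((1 + c) / w)`, `0 < c < 1`, all of which start below `-w`. -/
theorem expBarrier_lt_of_cooperative {C w t : ℝ} (hC : 0 < C)
    (hb₁ : ∀ s, b₁ s < C * δ * exp (δ * s)) (hb₂ : ∀ s, b₂ s < C * δ * exp (δ * s))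
    (hw : 0 < w) (hy₀ : w ≤ y₁ 0 ∧ w ≤ y₂ 0) (ht : 0 ≤ t) :
    expBarrier δ C (3 / (2 * w)) t < y₁ t ∧ expBarrier δ C (3 / (2 * w)) t < y₂ t := by
  set A := fun c : ℝ => (1 + c) / w
  have hA : ∀ c ∈ Ioo (0 : ℝ) 1, 0 < A c := fun c hc => div_pos (by linarith [hc.1]) hw
  have hWpos : ∀ c ∈ Ioo (0 : ℝ) 1, ∀ s, 0 ≤ s → 0 < expBarrier δ C (A c) s := fun c hc s hs =>
    expBarrier_pos hδ.le hC.le (hA c hc) hs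
  have hinit : ∀ c ∈ Ioo (0 : ℝ) 1,
      -y₁ 0 < -expBarrier δ C (A c) 0 ∧ -y₂ 0 < -expBarrier δ C (A c) 0 := by
    intro c hc
    have hWw : expBarrier δ C (A c) 0 < w := by
      rw [expBarrier_zero, inv_div, div_lt_iff₀ (by linarith [hc.1])]
      nlinarith [hc.1]
    exact ⟨neg_lt_neg (hWw.trans_le hy₀.1), neg_lt_neg (hWw.trans_le hy₀.2)⟩
  have h := lt_barrier_of_countable (y₁ := fun t => -y₁ t) (y₂ := fun t => -y₂ t)
    (Z := fun c t => -expBarrier δ C (A c) t) hy₁.neg hy₂.neg (fun s hs => (hy₁' s hs).neg)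
    (fun s hs => (hy₂' s hs).neg)
    (fun c hc => (continuousOn_expBarrier hδ.le hC.le (hA c hc)).neg)
    (fun c hc s hs => (hasDerivAt_expBarrier hδ.le hC.le (hA c hc) hs.le).neg) hinit
    (fun c hc s hs _ heq hle => by
      rw [neg_inj.mp heq]
      exact neg_lt_neg (neg_mul_sq_lt_mul_sub_sub_mul_sq (ha₁ s) (neg_le_neg_iff.mp hle)
        (hWpos c hc s hs.le) (hb₁ s)))
    (fun c hc s hs _ heq hle => by
      rw [neg_inj.mp heq]
      exact neg_lt_neg (neg_mul_sq_lt_mul_sub_sub_mul_sq (ha₂ s) (neg_le_neg_iff.mp hle)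
        (hWpos c hc s hs.le) (hb₂ s)))
    hS (fun t ht c hc c' hc' hcc' => neg_lt_neg <| expBarrier_lt_expBarrier hδ.le hC.le
      (hA c hc) ht (div_lt_div_of_pos_right (by linarith) hw))
    (c := 1 / 2) ⟨by norm_num, by norm_num⟩ ht
  have hA₀ : A (1 / 2) = 3 / (2 * w) := by norm_num [A]; ring
  rw [hA₀] at h
  exact ⟨neg_lt_neg_iff.mp h.1, neg_lt_neg_iff.mp h.2⟩

theorem eventually_mul_exp_le_of_cooperative {lo : ℝ} (hlo : 0 < lo)
    (hb₁ : ∀ s, lo * exp (δ * s) ≤ b₁ s) (hb₂ : ∀ s, lo * exp (δ * s) ≤ b₂ s) :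
    ∀ᶠ t in atTop, y₁ t * exp (δ * t) ≤ 4 * δ / lo ∧ y₂ t * exp (δ * t) ≤ 4 * δ / lo := by
  set B := lo / (2 * δ) with hB_def
  have hB : 0 < B := by positivity
  have hBδ : ∀ s, B * δ * exp (δ * s) < lo * exp (δ * s) := fun s => by
    have : B * δ = lo / 2 := by rw [hB_def]; field_simp
    rw [this]
    nlinarith [exp_pos (δ * s)]
  set Y := max (max (y₁ 0) (y₂ 0)) 1
  have hY : 0 < Y := lt_of_lt_of_le one_pos (le_max_right _ _)
  have hy₀ : y₁ 0 ≤ Y ∧ y₂ 0 ≤ Y :=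
    ⟨le_max_left _ _ |>.trans (le_max_left _ _), le_max_right _ _ |>.trans (le_max_left _ _)⟩
  filter_upwards [eventually_ge_atTop 0, eventually_le_exp_mul hδ 2] with t ht he
  have hZ : expBarrier δ B (3 / (4 * Y)) t * exp (δ * t) ≤ 4 * δ / lo := by
    refine (expBarrier_mul_exp_le hB (by positivity) he).trans_eq ?_
    rw [hB_def]
    field_simp
    ring
  have hy := lt_expBarrier_of_cooperative hS hδ hy₁ hy₂ hy₁' hy₂' ha₁ ha₂ hB
    (fun s => (hBδ s).trans_le (hb₁ s)) (fun s => (hBδ s).trans_le (hb₂ s)) hY hy₀ ht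
  exact ⟨(mul_le_mul_of_nonneg_right hy.1.le (exp_pos _).le).trans hZ,
    (mul_le_mul_of_nonneg_right hy.2.le (exp_pos _).le).trans hZ⟩

theorem eventually_le_mul_exp_of_cooperative {hi : ℝ} (hhi : 0 < hi)
    (hb₁ : ∀ s, b₁ s ≤ hi * exp (δ * s)) (hb₂ : ∀ s, b₂ s ≤ hi * exp (δ * s))
    (hy₁₀ : 0 < y₁ 0) (hy₂₀ : 0 < y₂ 0) :
    ∀ᶠ t in atTop, δ / (4 * hi) ≤ y₁ t * exp (δ * t) ∧ δ / (4 * hi) ≤ y₂ t * exp (δ * t) := by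
  set C := 2 * hi / δ with hC_def
  have hC : 0 < C := by positivity
  have hCδ : ∀ s, hi * exp (δ * s) < C * δ * exp (δ * s) := fun s => by
    have : C * δ = 2 * hi := by rw [hC_def]; field_simp
    rw [this]
    nlinarith [exp_pos (δ * s)]
  set w := min (y₁ 0) (y₂ 0)
  have hw : 0 < w := lt_min hy₁₀ hy₂₀
  filter_upwards [eventually_ge_atTop 0, eventually_le_exp_mul hδ 1,
    eventually_le_exp_mul hδ (3 / (2 * w) / C)] with t ht he hAe
  have hW : δ / (4 * hi) ≤ expBarrier δ C (3 / (2 * w)) t * exp (δ * t) := by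
    refine le_trans (le_of_eq ?_) (inv_two_mul_le_expBarrier_mul_exp hC (by positivity) he
      ((div_le_iff₀' hC).mp hAe))
    rw [hC_def]
    field_simp
    ring
  have hy := expBarrier_lt_of_cooperative hS hδ hy₁ hy₂ hy₁' hy₂' ha₁ ha₂ hC
    (fun s => (hb₁ s).trans_lt (hCδ s)) (fun s => (hb₂ s).trans_lt (hCδ s)) hw
    ⟨min_le_left _ _, min_le_right _ _⟩ ht
  exact ⟨hW.trans (mul_le_mul_of_nonneg_right hy.1.le (exp_pos _).le),
    hW.trans (mul_le_mul_of_nonneg_right hy.2.le (exp_pos _).le)⟩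

end Cooperative

theorem Function.Periodic.exists_abs_intervalIntegral_sub_le {f : ℝ → ℝ} {p : ℝ}
    (hf : Continuous f) (hper : Function.Periodic f p) (hp : p ≠ 0) :
    ∃ M, ∀ t, |(∫ s in (0 : ℝ)..t, f s) - t * ((∫ s in (0 : ℝ)..p, f s) / p)| ≤ M := by
  have hint : ∀ a b, IntervalIntegrable f MeasureTheory.volume a b := fun a b =>
    hf.intervalIntegrable a b
  have hHper : Function.Periodic
      (fun t => (∫ s in (0 : ℝ)..t, f s) - t * ((∫ s in (0 : ℝ)..p, f s) / p)) p := by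
    intro t
    simp only [hper.intervalIntegral_add_eq_add 0 t hint, zero_add]
    field_simp
    ring
  have hHc : Continuous
      (fun t => (∫ s in (0 : ℝ)..t, f s) - t * ((∫ s in (0 : ℝ)..p, f s) / p)) :=
    (intervalIntegral.continuous_primitive hint 0).sub (by fun_prop)
  obtain ⟨M, hM⟩ := isBounded_iff_forall_norm_le.mp (hHper.isBounded_of_continuous hp hHc)
  exact ⟨M, fun t => hM _ (mem_range_self t)⟩

theorem mul_exp_le_mul_exp_of_abs_sub_le {α φ x M : ℝ} (hα : 0 ≤ α) (h : |φ - x| ≤ M) :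
    α * exp (-M) * exp x ≤ α * exp φ ∧ α * exp φ ≤ α * exp M * exp x := by
  rw [mul_assoc, mul_assoc, ← exp_add, ← exp_add]
  constructor <;> gcongr <;> linarith [abs_le.mp h]

theorem mul_exp_mem_Icc_of_abs_sub_le {y φ x M lo hi : ℝ} (hlo : 0 ≤ lo)
    (hy : lo ≤ y * exp x ∧ y * exp x ≤ hi) (hφ : |φ - x| ≤ M) :
    y * exp φ ∈ Icc (lo * exp (-M)) (hi * exp M) := by
  have hφ' : exp (-M) ≤ exp (φ - x) ∧ exp (φ - x) ≤ exp M := by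
    rw [exp_le_exp, exp_le_exp]
    constructor <;> linarith [abs_le.mp hφ]
  rw [show y * exp φ = y * exp x * exp (φ - x) by rw [mul_assoc, ← exp_add, add_sub_cancel]]
  exact ⟨mul_le_mul hy.1 hφ'.1 (exp_pos _).le (hlo.trans hy.1),
    mul_le_mul hy.2 hφ'.2 (exp_pos _).le (hlo.trans hy.1 |>.trans hy.2)⟩

/-- The gauge `x e^{-φ}` absorbs the linear part `r x - m x` of the logistic equation, and the
term `m e^{ψ - φ}` of `φ'` turns the migration term into one of the same form in the gauged
variables. -/
theorem hasDerivAt_mul_exp_neg_of_logistic {x w φ ψ : ℝ → ℝ} {r α m s : ℝ}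
    (hx : HasDerivAt x (r * x s - α * x s ^ 2 + m * (w s - x s)) s)
    (hφ : HasDerivAt φ (r - m + m * exp (ψ s - φ s)) s) :
    HasDerivAt (fun t => x t * exp (-φ t))
      (m * exp (ψ s - φ s) * (w s * exp (-ψ s) - x s * exp (-φ s))
        - α * exp (φ s) * (x s * exp (-φ s)) ^ 2) s := by
  refine (hx.mul hφ.neg.exp).congr_deriv ?_
  simp only [Pi.neg_apply, exp_sub, exp_neg]
  field_simp
  ring

theorem hasDerivAt_add_half {G P : ℝ → ℝ} {u m ε s : ℝ}
    (hG : HasDerivAt G (m * cosh (P s) - m - ε) s)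
    (hP : HasDerivAt P (2 * (u - m * sinh (P s))) s) :
    HasDerivAt (fun t => G t + P t / 2)
      ((u - ε) - m + m * exp ((G s - P s / 2) - (G s + P s / 2))) s := by
  refine (hG.add (hP.div_const 2)).congr_deriv ?_
  rw [show G s - P s / 2 - (G s + P s / 2) = -P s by ring, ← cosh_sub_sinh]
  ring

theorem hasDerivAt_sub_half {G P : ℝ → ℝ} {u m ε s : ℝ}
    (hG : HasDerivAt G (m * cosh (P s) - m - ε) s)
    (hP : HasDerivAt P (2 * (u - m * sinh (P s))) s) :
    HasDerivAt (fun t => G t - P t / 2)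
      ((-u - ε) - m + m * exp ((G s + P s / 2) - (G s - P s / 2))) s := by
  refine (hG.sub (hP.div_const 2)).congr_deriv ?_
  rw [show G s + P s / 2 - (G s - P s / 2) = P s by ring, ← cosh_add_sinh]
  ring

theorem exists_abs_phase_sub_le {ε m T : ℝ} {P : ℝ → ℝ} (hT : 0 < T) (hPc : Continuous P)
    (hPper : Function.Periodic P (2 * T)) :
    ∃ M, ∀ t,
      |(∫ s in (0 : ℝ)..t, (m * cosh (P s) - m - ε)) + P t / 2 - DeltaP ε m T P / 2 * t| ≤ M ∧
      |(∫ s in (0 : ℝ)..t, (m * cosh (P s) - m - ε)) - P t / 2 - DeltaP ε m T P / 2 * t| ≤ M := by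
  obtain ⟨MG, hMG⟩ := Function.Periodic.exists_abs_intervalIntegral_sub_le
    (f := fun s => m * cosh (P s) - m - ε) (by fun_prop) (fun t => by simp only [hPper t])
    (by positivity : 2 * T ≠ 0)
  obtain ⟨MP, hMP⟩ :=
    isBounded_iff_forall_norm_le.mp (hPper.isBounded_of_continuous (by positivity) hPc)
  have hmean : DeltaP ε m T P / 2
      = (∫ s in (0 : ℝ)..2 * T, (m * cosh (P s) - m - ε)) / (2 * T) := by
    rw [DeltaP, intervalIntegral.integral_const_mul]
    ring
  refine ⟨MG + MP, fun t => ?_⟩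
  have hG := abs_le.mp (hMG t)
  have hP := abs_le.mp (hMP _ (mem_range_self t))
  rw [hmean]
  constructor <;> exact abs_le.mpr ⟨by linarith, by linarith⟩

theorem IsSolD.eventually_mem_Icc {ε α m T δ M : ℝ} {P G x₁ x₂ : ℝ → ℝ} (hα : 0 < α)
    (hm : 0 ≤ m) (hδ : 0 < δ) (hPc : Continuous P)
    (hP : ∀ t, (∀ n : ℤ, t ≠ n * T) → HasDerivAt P (2 * (squareWave T t - m * sinh (P t))) t)
    (hG : ∀ t, HasDerivAt G (m * cosh (P t) - m - ε) t)
    (hM : ∀ t, |G t + P t / 2 - δ * t| ≤ M ∧ |G t - P t / 2 - δ * t| ≤ M)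
    (hx : IsSolD ε α m T x₁ x₂) (h₁ : 0 < x₁ 0) (h₂ : 0 < x₂ 0) :
    ∀ᶠ t in atTop,
      x₁ t ∈ Icc (δ / (4 * (α * exp M)) * exp (-M)) (4 * δ / (α * exp (-M)) * exp M) ∧
      x₂ t ∈ Icc (δ / (4 * (α * exp M)) * exp (-M)) (4 * δ / (α * exp (-M)) * exp M) := by
  obtain ⟨hx₁, hx₂, hx'⟩ := hx
  have hGc : Continuous G := continuous_iff_continuousAt.mpr fun t => (hG t).continuousAt
  have hS : ∀ s ∉ range fun n : ℤ => (n : ℝ) * T, ∀ n : ℤ, s ≠ n * T :=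
    fun s hs n h => hs ⟨n, h.symm⟩
  set φ₁ := fun t => G t + P t / 2
  set φ₂ := fun t => G t - P t / 2
  have hy₁ := fun s hs => hasDerivAt_mul_exp_neg_of_logistic (φ := φ₁) (ψ := φ₂)
    (hx' s (hS s hs)).1 (hasDerivAt_add_half (hG s) (hP s (hS s hs)))
  have hy₂ := fun s hs => hasDerivAt_mul_exp_neg_of_logistic (φ := φ₂) (ψ := φ₁)
    (hx' s (hS s hs)).2 (hasDerivAt_sub_half (hG s) (hP s (hS s hs)))
  have ha : ∀ φ ψ : ℝ → ℝ, ∀ s, 0 ≤ m * exp (ψ s - φ s) := fun _ _ _ => by positivity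
  have hb₁ := fun s => mul_exp_le_mul_exp_of_abs_sub_le hα.le (hM s).1
  have hb₂ := fun s => mul_exp_le_mul_exp_of_abs_sub_le hα.le (hM s).2
  have hupper := eventually_mul_exp_le_of_cooperative (countable_range _) hδ (by fun_prop)
    (by fun_prop) hy₁ hy₂ (ha φ₁ φ₂) (ha φ₂ φ₁) (by positivity) (fun s => (hb₁ s).1)
    (fun s => (hb₂ s).1)
  have hlower := eventually_le_mul_exp_of_cooperative (countable_range _) hδ (by fun_prop)
    (by fun_prop) hy₁ hy₂ (ha φ₁ φ₂) (ha φ₂ φ₁) (by positivity) (fun s => (hb₁ s).2)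
    (fun s => (hb₂ s).2) (by positivity) (by positivity)
  filter_upwards [hupper, hlower] with t ⟨hu₁, hu₂⟩ ⟨hl₁, hl₂⟩
  have hgauge : ∀ (x φ : ℝ → ℝ), x t = x t * exp (-φ t) * exp (φ t) := fun x φ => by
    rw [mul_assoc, ← exp_add, neg_add_cancel, exp_zero, mul_one]
  rw [hgauge x₁ φ₁, hgauge x₂ φ₂]
  exact ⟨mul_exp_mem_Icc_of_abs_sub_le (by positivity) ⟨hl₁, hu₁⟩ (hM t).1,
    mul_exp_mem_Icc_of_abs_sub_le (by positivity) ⟨hl₂, hu₂⟩ (hM t).2⟩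

theorem statement17_general (ε α m T : ℝ) (hα : 0 < α)
    (hm : 0 < m) (hT : 0 < T)
    (P : ℝ → ℝ) (hP : IsSolF m T P) (hPper : Function.Periodic P (2 * T))
    (hΔ : 0 < DeltaP ε m T P) :
    ∃ a b : ℝ, 0 < a ∧ a < b ∧
      ∀ x₁ x₂ : ℝ → ℝ, IsSolD ε α m T x₁ x₂ → 0 < x₁ 0 → 0 < x₂ 0 →
        ∃ t₀ : ℝ, ∀ t : ℝ, t₀ ≤ t →
          x₁ t ∈ Set.Icc a b ∧ x₂ t ∈ Set.Icc a b := by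
  obtain ⟨hPc, hP'⟩ := hP
  have hδ : 0 < DeltaP ε m T P / 2 := by positivity
  have hG : ∀ t, HasDerivAt (fun t => ∫ s in (0 : ℝ)..t, (m * cosh (P s) - m - ε))
      (m * cosh (P t) - m - ε) t := fun t =>
    ((by fun_prop : Continuous fun s => m * cosh (P s) - m - ε).integral_hasStrictDerivAt
      0 t).hasDerivAt
  obtain ⟨M, hM⟩ := exists_abs_phase_sub_le (ε := ε) (m := m) hT hPc hPper
  have hM0 : 0 ≤ M := (abs_nonneg _).trans (hM 0).1
  have hE : 1 ≤ exp M := one_le_exp hM0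
  refine ⟨_, _, by positivity, ?_, fun x₁ x₂ hx h₁ h₂ =>
    (hx.eventually_mem_Icc hα hm.le hδ hPc hP' hG hM h₁ h₂).exists_forall_of_atTop⟩
  rw [exp_neg]
  field_simp
  nlinarith [mul_pos hΔ hα, mul_le_mul hE hE zero_le_one (by positivity : (0 : ℝ) ≤ exp M)]

theorem statement17 (ε α m T : ℝ) (hε : 0 < ε) (hε1 : ε ≤ 1) (hα : 0 < α)
    (hm : 0 < m) (hT : 0 < T)
    (P : ℝ → ℝ) (hP : IsSolF m T P) (hPper : Function.Periodic P (2 * T))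
    (hΔ : 0 < DeltaP ε m T P) :
    ∃ a b : ℝ, 0 < a ∧ a < b ∧
      ∀ x₁ x₂ : ℝ → ℝ, IsSolD ε α m T x₁ x₂ → 0 < x₁ 0 → 0 < x₂ 0 →
        ∃ t₀ : ℝ, ∀ t : ℝ, t₀ ≤ t →
          x₁ t ∈ Set.Icc a b ∧ x₂ t ∈ Set.Icc a b :=
  statement17_general ε α m T hα hm hT P hP hPper hΔ
end

section
/- Let 0 < ε ≤ 1, m > 0, T > 0, and suppose Δ(ε,m,T) > 0. Then for every a > 0 there exists θ > 0 such that for all V₀ ∈ [V_m^−, V_m^+], all U₀ ∈ ℝ and all t₀ ∈ ℝ, the solution (U, V) of the switched system S(ε,m,T) — namely dU/dt = 2(m·cosh(V) − m − ε), dV/dt = 2(u(t) − m·sinh(V)) — with initial condition (U(t₀), V(t₀)) = (U₀, V₀) satisfies U(t₀ + θ) ≥ U₀ + a. -/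
open Real Filter Set

/-- A solution of the planar switched system `S(ε,m,T)` in the variables `(U,V)`. -/
def IsSolS (ε m T : ℝ) (U V : ℝ → ℝ) : Prop :=
  Continuous U ∧ Continuous V ∧ ∀ t : ℝ, (∀ n : ℤ, t ≠ n * T) →
    HasDerivAt U (2 * (m * Real.cosh (V t) - m - ε)) t ∧
    HasDerivAt V (2 * (squareWave T t - m * Real.sinh (V t))) t

/-!
Two solutions of the `V`-equation driven by the same square wave contract towards each other:
since `sinh` is expansive, `(a - b)² ≤ (sinh a - sinh b)(a - b)`, the difference `w = V - P`
satisfies `w' w ≤ -2m w²`, so `|w t| ≤ |w t₀| e^{-2m(t - t₀)}`. Along `[t₀, t₀ + θ]` the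
`U`-increment `∫ 2(m cosh V - m - ε)` therefore differs from the same integral along `P` by at most
`∫ 2m cosh(M) |w| ≤ cosh(M) |w t₀|`, where `M` bounds `|V|` and `|P|`; this is independent of `θ`.
Over `k` periods the integral along `P` is `k · 2T Δ`, which exceeds `a` plus this error once `k`
is large.
-/

open Topology

section

variable {E : Type*} [NormedAddCommGroup E] [NormedSpace ℝ E]

theorem hasDerivAt_of_eventually_hasDerivAt_ne {f g : ℝ → E} {x : ℝ}
    (hd : ∀ᶠ y in 𝓝[≠] x, HasDerivAt f (g y) y) (hf : ContinuousAt f x)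
    (hg : ContinuousAt g x) : HasDerivAt f (g x) x := by
  have hderiv : g =ᶠ[𝓝[≠] x] deriv f := hd.mono fun y hy => hy.deriv.symm
  have hdiff : DifferentiableOn ℝ f {y | HasDerivAt f (g y) y} :=
    fun y hy => hy.differentiableAt.differentiableWithinAt
  have hright : HasDerivWithinAt f (g x) (Ici x) x :=
    hasDerivWithinAt_Ici_of_tendsto_deriv hdiff hf.continuousWithinAt
      (nhdsGT_le_nhdsNE x hd)
      ((hg.tendsto.mono_left nhdsWithin_le_nhds).congr' (hderiv.filter_mono (nhdsGT_le_nhdsNE x)))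
  have hleft : HasDerivWithinAt f (g x) (Iic x) x :=
    hasDerivWithinAt_Iic_of_tendsto_deriv hdiff hf.continuousWithinAt
      (nhdsLT_le_nhdsNE x hd)
      ((hg.tendsto.mono_left nhdsWithin_le_nhds).congr' (hderiv.filter_mono (nhdsLT_le_nhdsNE x)))
  simpa using hleft.union hright

theorem eventually_nhdsNE_forall_ne_intCast_mul (T x : ℝ) :
    ∀ᶠ y in 𝓝[≠] x, ∀ n : ℤ, y ≠ n * T := by
  have hclosed : IsClosed (AddSubgroup.zmultiples T : Set ℝ) :=
    AddSubgroup.isClosed_of_discrete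
  have hdisc : IsDiscrete (AddSubgroup.zmultiples T : Set ℝ) := by
    rw [SetLike.isDiscrete_iff_discreteTopology]; infer_instance
  filter_upwards [disjoint_principal_right.1 (isClosed_and_discrete_iff.1 ⟨hclosed, hdisc⟩ x)]
    with y hy n hn
  exact hy ⟨n, by simp [hn]⟩

theorem hasDerivAt_of_forall_ne_intCast_mul {T : ℝ} {f g : ℝ → E}
    (hf : Continuous f) (hg : Continuous g)
    (hd : ∀ t, (∀ n : ℤ, t ≠ n * T) → HasDerivAt f (g t) t) (t : ℝ) :
    HasDerivAt f (g t) t :=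
  hasDerivAt_of_eventually_hasDerivAt_ne
    ((eventually_nhdsNE_forall_ne_intCast_mul T t).mono hd) hf.continuousAt hg.continuousAt

end

theorem sq_sub_le_sinh_sub_mul_sub (a b : ℝ) : (a - b) ^ 2 ≤ (sinh a - sinh b) * (a - b) := by
  rcases le_total b a with h | h
  · nlinarith [sinh_sub_id_strictMono.monotone h]
  · nlinarith [sinh_sub_id_strictMono.monotone h]

theorem abs_cosh_sub_cosh_le {M a b : ℝ} (ha : |a| ≤ M) (hb : |b| ≤ M) :
    |cosh a - cosh b| ≤ cosh M * |a - b| := by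
  have hsinh : ∀ x ∈ Icc (-M) M, ‖sinh x‖ ≤ cosh M := fun x hx => by
    rw [norm_eq_abs, abs_sinh]
    exact (sinh_le_sinh.2 (abs_le.2 hx)).trans (sinh_lt_cosh M).le
  simpa [norm_eq_abs] using (convex_Icc (-M) M).norm_image_sub_le_of_norm_hasDerivWithin_le
    (fun x _ => (hasDerivAt_cosh x).hasDerivWithinAt) hsinh (abs_le.1 hb) (abs_le.1 ha)

theorem integral_mul_exp_neg_mul_sub_le_one (c t₀ θ : ℝ) :
    ∫ t in t₀..t₀ + θ, c * exp (-c * (t - t₀)) ≤ 1 := by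
  have hderiv : ∀ t, HasDerivAt (fun t => -exp (-c * (t - t₀))) (c * exp (-c * (t - t₀))) t :=
    fun t => by
      have := (((hasDerivAt_id t).sub_const t₀).const_mul (-c)).exp.neg
      exact this.congr_deriv (by simp; ring)
  rw [intervalIntegral.integral_eq_sub_of_hasDerivAt (fun t _ => hderiv t)
    (by apply Continuous.intervalIntegrable; fun_prop)]
  simp only [add_sub_cancel_left, sub_self, mul_zero, exp_zero]
  linarith [exp_pos (-c * θ)]

theorem abs_le_abs_mul_exp_of_deriv_mul_le {w w' : ℝ → ℝ} {c t₀ t : ℝ}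
    (hw : ∀ t, HasDerivAt w (w' t) t) (hdec : ∀ t, w' t * w t ≤ -c * w t ^ 2) (ht : t₀ ≤ t) :
    |w t| ≤ |w t₀| * exp (-c * (t - t₀)) := by
  set G : ℝ → ℝ := fun s => w s ^ 2 * exp (2 * c * s)
  have hG : ∀ s, HasDerivAt G (2 * (w' s * w s + c * w s ^ 2) * exp (2 * c * s)) s := fun s => by
    have := ((hw s).pow 2).mul (((hasDerivAt_id s).const_mul (2 * c)).exp)
    exact this.congr_deriv (by simp; ring)
  have hG_anti : Antitone G := antitone_of_deriv_nonpos (fun s => (hG s).differentiableAt)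
    fun s => by
      rw [(hG s).deriv]
      exact mul_nonpos_of_nonpos_of_nonneg (by linarith [hdec s]) (exp_pos _).le
  have hbound : (|w t₀| * exp (-c * (t - t₀))) ^ 2 * exp (2 * c * t) = G t₀ := by
    have hexp : exp (-c * (t - t₀)) ^ 2 * exp (2 * c * t) = exp (2 * c * t₀) := by
      rw [sq, ← exp_add, ← exp_add]
      ring_nf
    rw [mul_pow, sq_abs, mul_assoc, hexp]
  have hsq : w t ^ 2 ≤ (|w t₀| * exp (-c * (t - t₀))) ^ 2 :=
    le_of_mul_le_mul_right ((hG_anti ht).trans_eq hbound.symm) (exp_pos _)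
  simpa [abs_of_nonneg (by positivity : 0 ≤ |w t₀| * exp (-c * (t - t₀)))] using sq_le_sq.1 hsq

theorem Function.Periodic.intervalIntegral_add_nat_mul_eq {f : ℝ → ℝ} {c : ℝ}
    (hf : Function.Periodic f c) (hfc : Continuous f) (k : ℕ) (t : ℝ) :
    ∫ x in t..t + k * c, f x = k * ∫ x in 0..c, f x := by
  have := hf.intervalIntegral_add_zsmul_eq k t fun _ _ => hfc.intervalIntegrable _ _
  rw [hf.intervalIntegral_add_eq t 0, zero_add] at this
  simpa using this

theorem IsSolS.isSolF {ε m T : ℝ} {U V : ℝ → ℝ} (hS : IsSolS ε m T U V) : IsSolF m T V :=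
  ⟨hS.2.1, fun t ht => (hS.2.2 t ht).2⟩

theorem IsSolS.integral_eq_sub {ε m T : ℝ} {U V : ℝ → ℝ} (hS : IsSolS ε m T U V) (a b : ℝ) :
    ∫ t in a..b, 2 * (m * cosh (V t) - m - ε) = U b - U a := by
  have hcont : Continuous fun t => 2 * (m * cosh (V t) - m - ε) := by
    have := hS.2.1; fun_prop
  exact intervalIntegral.integral_eq_sub_of_hasDerivAt
    (fun t _ => hasDerivAt_of_forall_ne_intCast_mul hS.1 hcont (fun t ht => (hS.2.2 t ht).1) t)
    (hcont.intervalIntegrable a b)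

theorem IsSolF.abs_sub_le {m T : ℝ} {V P : ℝ → ℝ} (hm : 0 ≤ m) (hV : IsSolF m T V)
    (hP : IsSolF m T P) {t₀ t : ℝ} (ht : t₀ ≤ t) :
    |V t - P t| ≤ |V t₀ - P t₀| * exp (-(2 * m) * (t - t₀)) := by
  have hcont : Continuous fun t => -(2 * m) * (sinh (V t) - sinh (P t)) := by
    have := hV.1; have := hP.1; fun_prop
  -- The square wave cancels in `(V - P)'`, which is therefore continuous, even at the switches.
  refine abs_le_abs_mul_exp_of_deriv_mul_le (w := fun t => V t - P t)
    (w' := fun t => -(2 * m) * (sinh (V t) - sinh (P t))) (fun t => ?_)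
    (fun t => ?_) ht
  · exact hasDerivAt_of_forall_ne_intCast_mul (hV.1.sub hP.1) hcont
      (fun t ht => ((hV.2 t ht).sub (hP.2 t ht)).congr_deriv (by ring)) t
  · nlinarith [sq_sub_le_sinh_sub_mul_sub (V t) (P t)]

theorem IsSolS.integral_sub_le_sub {ε m T C M t₀ θ : ℝ} {U V P : ℝ → ℝ} (hm : 0 ≤ m)
    (hS : IsSolS ε m T U V) (hP : IsSolF m T P) (hPM : ∀ t, |P t| ≤ M) (hθ : 0 ≤ θ)
    (hC : |V t₀ - P t₀| ≤ C) :
    (∫ t in t₀..t₀ + θ, 2 * (m * cosh (P t) - m - ε)) - cosh (C + M) * C ≤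
      U (t₀ + θ) - U t₀ := by
  set K := cosh (C + M) * C
  have hC0 : 0 ≤ C := (abs_nonneg _).trans hC
  have hK : 0 ≤ K := mul_nonneg (cosh_pos _).le hC0
  have hdecay : ∀ t, t₀ ≤ t → |V t - P t| ≤ C * exp (-(2 * m) * (t - t₀)) := fun t ht =>
    (hS.isSolF.abs_sub_le hm hP ht).trans
      (mul_le_mul_of_nonneg_right hC (exp_pos _).le)
  have hpointwise : ∀ t ∈ Icc t₀ (t₀ + θ),
      2 * (m * cosh (P t) - m - ε) - K * (2 * m * exp (-(2 * m) * (t - t₀))) ≤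
        2 * (m * cosh (V t) - m - ε) := by
    rintro t ⟨ht, -⟩
    have hexp : exp (-(2 * m) * (t - t₀)) ≤ 1 := exp_le_one_iff.2 (by nlinarith)
    have hVM : |V t| ≤ C + M := calc
      |V t| ≤ |V t - P t| + |P t| := by linarith [abs_sub_abs_le_abs_sub (V t) (P t)]
      _ ≤ C + M := add_le_add ((hdecay t ht).trans (mul_le_of_le_one_right hC0 hexp)) (hPM t)
    have hPM' : |P t| ≤ C + M := by linarith [hPM t]
    have hcosh : cosh (P t) - cosh (V t) ≤ K * exp (-(2 * m) * (t - t₀)) := calc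
      cosh (P t) - cosh (V t) ≤ |cosh (V t) - cosh (P t)| := by
        rw [abs_sub_comm]; exact le_abs_self _
      _ ≤ cosh (C + M) * |V t - P t| := abs_cosh_sub_cosh_le hVM hPM'
      _ ≤ cosh (C + M) * (C * exp (-(2 * m) * (t - t₀))) :=
        mul_le_mul_of_nonneg_left (hdecay t ht) (cosh_pos _).le
      _ = K * exp (-(2 * m) * (t - t₀)) := by ring
    linarith [mul_le_mul_of_nonneg_left hcosh (by positivity : (0 : ℝ) ≤ 2 * m)]
  have hcontP : Continuous fun t => 2 * (m * cosh (P t) - m - ε) := by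
    have := hP.1; fun_prop
  calc (∫ t in t₀..t₀ + θ, 2 * (m * cosh (P t) - m - ε)) - K
      ≤ (∫ t in t₀..t₀ + θ, 2 * (m * cosh (P t) - m - ε)) -
          K * ∫ t in t₀..t₀ + θ, 2 * m * exp (-(2 * m) * (t - t₀)) := by
        gcongr
        exact mul_le_of_le_one_right hK (integral_mul_exp_neg_mul_sub_le_one _ _ _)
    _ = ∫ t in t₀..t₀ + θ, (2 * (m * cosh (P t) - m - ε) -
          K * (2 * m * exp (-(2 * m) * (t - t₀)))) := by
        rw [intervalIntegral.integral_sub (hcontP.intervalIntegrable _ _)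
          (by apply Continuous.intervalIntegrable; fun_prop), intervalIntegral.integral_const_mul K]
    _ ≤ ∫ t in t₀..t₀ + θ, 2 * (m * cosh (V t) - m - ε) :=
        intervalIntegral.integral_mono_on (by linarith)
          (by apply Continuous.intervalIntegrable; fun_prop)
          (by apply Continuous.intervalIntegrable; have := hS.2.1; fun_prop) hpointwise
    _ = U (t₀ + θ) - U t₀ := hS.integral_eq_sub _ _

theorem statement18_general (ε m T : ℝ) (hm : 0 < m) (hT : 0 < T)
    (P : ℝ → ℝ) (hP : IsSolF m T P) (hPper : Function.Periodic P (2 * T))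
    (hΔ : 0 < DeltaP ε m T P) :
    ∀ a : ℝ, 0 < a → ∃ θ : ℝ, 0 < θ ∧
      ∀ V₀ ∈ Set.Icc (-Real.arsinh (1 / m)) (Real.arsinh (1 / m)),
        ∀ U₀ t₀ : ℝ, ∀ U V : ℝ → ℝ, IsSolS ε m T U V →
          U t₀ = U₀ → V t₀ = V₀ → U₀ + a ≤ U (t₀ + θ) := by
  intro a ha
  obtain ⟨M, hM⟩ : ∃ M, ∀ t, |P t| ≤ M := by
    simpa [norm_eq_abs] using isBounded_iff_forall_norm_le.1
      (hPper.isBounded_of_continuous (by positivity) hP.1)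
  set C := arsinh (1 / m) + M
  have hC : 0 ≤ C := add_nonneg (arsinh_nonneg_iff.2 (by positivity)) ((abs_nonneg _).trans (hM 0))
  set I := ∫ s in (0 : ℝ)..2 * T, 2 * (m * cosh (P s) - m - ε)
  have hI : 0 < I := pos_of_mul_pos_right hΔ (by positivity)
  obtain ⟨k, hk⟩ := exists_nat_gt ((a + cosh (C + M) * C) / I)
  have hk' : a + cosh (C + M) * C < k * I := (div_lt_iff₀ hI).1 hk
  have hk0 : (0 : ℝ) < k := pos_of_mul_pos_left (by nlinarith [cosh_pos (C + M)]) hI.le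
  refine ⟨k * (2 * T), by positivity, ?_⟩
  rintro V₀ hV₀ U₀ t₀ U V hS rfl rfl
  have hV₀P : |V t₀ - P t₀| ≤ C := (abs_sub _ _).trans (add_le_add (abs_le.2 hV₀) (hM t₀))
  have hdrift := hS.integral_sub_le_sub (θ := k * (2 * T)) hm.le hP hM (by positivity) hV₀P
  have hperiodic : Function.Periodic (fun s => 2 * (m * cosh (P s) - m - ε)) (2 * T) :=
    fun s => by simp only [hPper s]
  rw [hperiodic.intervalIntegral_add_nat_mul_eq (by have := hP.1; fun_prop)] at hdrift
  linarith

theorem statement18 (ε m T : ℝ) (hε : 0 < ε) (hε1 : ε ≤ 1) (hm : 0 < m) (hT : 0 < T)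
    (P : ℝ → ℝ) (hP : IsSolF m T P) (hPper : Function.Periodic P (2 * T))
    (hΔ : 0 < DeltaP ε m T P) :
    ∀ a : ℝ, 0 < a → ∃ θ : ℝ, 0 < θ ∧
      ∀ V₀ ∈ Set.Icc (-Real.arsinh (1 / m)) (Real.arsinh (1 / m)),
        ∀ U₀ t₀ : ℝ, ∀ U V : ℝ → ℝ, IsSolS ε m T U V →
          U t₀ = U₀ → V t₀ = V₀ → U₀ + a ≤ U (t₀ + θ) :=
  statement18_general ε m T hm hT P hP hPper hΔ
end

section
/- Let m > 0, T > 0, S > 0 and set k = ⌊S/T⌋ + 1. There exists a constant C(S,m,T) such that for all sufficiently small η > 0 the following holds. Let u : [0,S] → {−1,+1} be the restriction of the 2T-periodic square wave (u = +1 on [0,T), u = −1 on [T,2T)), and let ũ : [0,S] → {−1,+1} be any piecewise constant signal starting at ũ(0) = +1 whose j-th switching time t̃_j satisfies |t̃_j − jT| ≤ jη for every j with jT ≤ S + T. If V and Ṽ solve respectively dV/dt = 2(u(t) − m·sinh(V)) and dṼ/dt = 2(ũ(t) − m·sinh(Ṽ)) on [0,S] with the same initial condition V(0) = Ṽ(0)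 ∈ [V_m^−, V_m^+], then ∫₀^S |ũ(t) − u(t)| dt ≤ 2k²η and sup_{t ∈ [0,S]} |Ṽ(t) − V(t)| ≤ C(S,m,T)·η. -/
/-!
Let `w = Ṽ - V`. Since `sinh` is increasing, the damping terms can only shrink `|w|`, so `|w|`
grows at rate at most `2 |ũ - u|`. The two signals agree except on the windows between `jT` and
`t̃_j` (`j ≤ K`), of length at most `jη` and pairwise disjoint for small `η`. On a window
`|ũ - u| ≤ 2`; summing the window lengths gives the `L¹` bound, and since `|w|` cannot increase
on the gaps between windows and grows by at most `4jη ≤ 4Kη` across the `j`-th window, `|w| ≤ 4K²η`.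
-/

open Real Filter Set

theorem abs_le_abs_add_mul_of_mul_deriv_le {w w' : ℝ → ℝ} {a b c : ℝ} (hab : a ≤ b) (hc : 0 ≤ c)
    (hw : ContinuousOn w (Icc a b)) (hw' : ∀ x ∈ Ioo a b, HasDerivAt w (w' x) x)
    (h : ∀ x ∈ Ioo a b, w x * w' x ≤ c * |w x|) : |w b| ≤ |w a| + c * (b - a) := by
  refine le_of_forall_pos_le_add fun δ hδ => ?_
  -- `√(w² + δ²)` is a differentiable stand-in for `|w|`.
  have hpos : ∀ x, 0 < w x ^ 2 + δ ^ 2 := fun x => by positivity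
  have hanti : AntitoneOn (fun t => √(w t ^ 2 + δ ^ 2) - c * t) (Icc a b) := by
    refine antitoneOn_of_hasDerivWithinAt_nonpos
      (f' := fun x => w x * w' x / √(w x ^ 2 + δ ^ 2) - c) (convex_Icc a b) ?_
      (fun x hx => ?_) (fun x hx => ?_)
    · exact ((hw.pow 2).add continuousOn_const).sqrt.sub
        (continuousOn_const.mul continuousOn_id)
    · rw [interior_Icc] at hx
      have hd := (((hw' x hx).pow 2).add_const (δ ^ 2)).sqrt (hpos x).ne' |>.sub
        ((hasDerivAt_id x).const_mul c)
      refine (hd.congr_deriv ?_).hasDerivWithinAt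
      simp only [Pi.pow_apply]
      field_simp
      ring
    · rw [interior_Icc] at hx
      have hsqrt : |w x| ≤ √(w x ^ 2 + δ ^ 2) := abs_le_sqrt (by linarith [hpos x, sq_nonneg δ])
      rw [sub_nonpos, div_le_iff₀ (sqrt_pos.2 (hpos x))]
      nlinarith [h x hx]
  calc |w b| ≤ √(w b ^ 2 + δ ^ 2) := abs_le_sqrt (by nlinarith)
    _ ≤ √(w a ^ 2 + δ ^ 2) + c * (b - a) := by
      linarith [hanti (left_mem_Icc.2 hab) (right_mem_Icc.2 hab) hab]
    _ ≤ |w a| + δ + c * (b - a) := by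
      gcongr
      rw [sqrt_le_left (by positivity)]
      nlinarith [sq_abs (w a), abs_nonneg (w a)]
    _ = |w a| + c * (b - a) + δ := by ring

theorem mul_sub_sinh_sub_nonneg (x y : ℝ) : 0 ≤ (x - y) * (sinh x - sinh y) := by
  rcases le_total x y with hxy | hxy
  · exact mul_nonneg_of_nonpos_of_nonpos (sub_nonpos.2 hxy) (sub_nonpos.2 (sinh_le_sinh.2 hxy))
  · exact mul_nonneg (sub_nonneg.2 hxy) (sub_nonneg.2 (sinh_le_sinh.2 hxy))

theorem abs_sub_le_of_hasDerivAt_sinh {m d a b : ℝ} {u v U W : ℝ → ℝ} (hm : 0 ≤ m) (hd : 0 ≤ d)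
    (hab : a ≤ b) (hU : ContinuousOn U (Icc a b)) (hW : ContinuousOn W (Icc a b))
    (hU' : ∀ x ∈ Ioo a b, HasDerivAt U (2 * (u x - m * sinh (U x))) x)
    (hW' : ∀ x ∈ Ioo a b, HasDerivAt W (2 * (v x - m * sinh (W x))) x)
    (huv : ∀ x ∈ Ioo a b, |u x - v x| ≤ d) :
    |U b - W b| ≤ |U a - W a| + 2 * d * (b - a) := by
  refine abs_le_abs_add_mul_of_mul_deriv_le (w := fun t => U t - W t) hab (by positivity)
    (hU.sub hW) (fun x hx => (hU' x hx).sub (hW' x hx)) fun x hx => ?_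
  -- `sinh` is increasing, so the damping term pulls `U` and `W` together.
  have hdiss := mul_nonneg hm (mul_sub_sinh_sub_nonneg (U x) (W x))
  have hinput : (U x - W x) * (u x - v x) ≤ d * |U x - W x| := by
    calc (U x - W x) * (u x - v x) ≤ |U x - W x| * |u x - v x| := by
          rw [← abs_mul]; exact le_abs_self _
      _ ≤ |U x - W x| * d := by gcongr; exact huv x hx
      _ = d * |U x - W x| := mul_comm _ _
  nlinarith

theorem Monotone.exists_mem_Ico_succ {α : Type*} [LinearOrder α] {f : ℕ → α}
    (hf : Monotone f) {t : α} (h₀ : f 0 ≤ t) :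
    ∀ {n : ℕ}, t < f n → ∃ j < n, t ∈ Ico (f j) (f (j + 1))
  | 0, h => absurd h (not_lt.2 h₀)
  | n + 1, h => by
    by_cases hn : t < f n
    · obtain ⟨j, hj, hmem⟩ := hf.exists_mem_Ico_succ h₀ hn
      exact ⟨j, by omega, hmem⟩
    · exact ⟨n, by omega, not_lt.1 hn, h⟩

theorem Monotone.ne_of_lt_of_lt_succ {α β : Type*} [LinearOrder α] [SuccOrder α] [Preorder β]
    {f : α → β} (hf : Monotone f) {j : α} {x : β} (h₁ : f j < x) (h₂ : x < f (Order.succ j))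
    (i : α) : x ≠ f i := by
  rintro rfl
  rcases le_or_gt i j with hij | hij
  · exact (h₁.trans_le (hf hij)).false
  · exact (h₂.trans_le (hf (Order.succ_le_of_lt hij))).false

theorem ne_intCast_mul_of_lt_of_lt {T x : ℝ} (hT : 0 < T) {k : ℤ} (h₁ : k * T < x)
    (h₂ : x < (k + 1) * T) (n : ℤ) : x ≠ n * T :=
  Monotone.ne_of_lt_of_lt_succ (f := fun n : ℤ => (n : ℝ) * T)
    (fun _ _ hab => mul_le_mul_of_nonneg_right (Int.cast_le.2 hab) hT.le) h₁
    (by rwa [Order.succ_eq_add_one, Int.cast_add, Int.cast_one]) n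

theorem squareWave_eq_neg_one_pow {T t : ℝ} (hT : 0 < T) {j : ℕ} (h₁ : j * T ≤ t)
    (h₂ : t < (j + 1) * T) : squareWave T t = (-1) ^ j := by
  obtain ⟨k, rfl | rfl⟩ := Nat.even_or_odd' j
  all_goals
    push_cast at h₁ h₂
    have hfract : Int.fract (t / (2 * T)) = (t - 2 * k * T) / (2 * T) :=
      Int.fract_eq_iff.2 ⟨by apply div_nonneg <;> nlinarith,
        by rw [div_lt_one (by positivity)]; nlinarith, k, by push_cast; field_simp; ring⟩
    simp only [squareWave, hfract, pow_succ, pow_mul]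
  · rw [if_pos (by rw [div_lt_iff₀ (by positivity)]; nlinarith)]; norm_num
  · rw [if_neg (by rw [div_lt_iff₀ (by positivity)]; nlinarith)]; norm_num

theorem abs_squareWave (T t : ℝ) : |squareWave T t| = 1 := by
  unfold squareWave; split <;> simp

def IsSwitchFree (T : ℝ) (ts : ℕ → ℝ) (x : ℝ) : Prop :=
  (∀ n : ℤ, x ≠ n * T) ∧ ∀ i, x ≠ ts i

def IsAlternatingSignal (ts : ℕ → ℝ) (ut : ℝ → ℝ) : Prop :=
  ∀ j : ℕ, ∀ t ∈ Ico (ts j) (ts (j + 1)), ut t = (-1) ^ j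

section Gap

variable {T : ℝ} {K j : ℕ} {ts : ℕ → ℝ} {ut : ℝ → ℝ} {t x : ℝ}

theorem isSwitchFree_of_mem_Ioo_max_min (hT : 0 < T) (hts : Monotone ts)
    (hx : x ∈ Ioo (max (j * T) (ts j)) (min ((j + 1) * T) (ts (j + 1)))) :
    IsSwitchFree T ts x := by
  simp only [mem_Ioo, max_lt_iff, lt_min_iff] at hx
  exact ⟨ne_intCast_mul_of_lt_of_lt hT (k := j) (mod_cast hx.1.1) (mod_cast hx.2.1),
    hts.ne_of_lt_of_lt_succ hx.1.2 hx.2.2⟩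

theorem eq_squareWave_of_mem_Ioo_max_min (hT : 0 < T) (hut : IsAlternatingSignal ts ut)
    (hx : x ∈ Ioo (max (j * T) (ts j)) (min ((j + 1) * T) (ts (j + 1)))) :
    ut x = squareWave T x := by
  simp only [mem_Ioo, max_lt_iff, lt_min_iff] at hx
  rw [hut j x ⟨hx.1.2.le, hx.2.2⟩, squareWave_eq_neg_one_pow hT hx.1.1.le hx.2.1]

theorem eq_squareWave_of_forall_notMem_uIcc (hT : 0 < T)
    (hut : IsAlternatingSignal ts ut) (ht₀ : 0 ≤ t) (htK : t < K * T)
    (hout : ∀ j ≤ K, t ∉ uIcc (j * T) (ts j)) :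
    ut t = squareWave T t := by
  set j := ⌊t / T⌋₊
  have hj : j * T ≤ t := by
    have := Nat.floor_le (div_nonneg ht₀ hT.le); rwa [le_div_iff₀ hT] at this
  have hj₁ : t < (j + 1) * T := by
    have := Nat.lt_floor_add_one (t / T); rwa [div_lt_iff₀ hT] at this
  have hjK : j + 1 ≤ K := by
    have : (j : ℝ) < K := lt_of_mul_lt_mul_right (hj.trans_lt htK) hT.le
    exact_mod_cast this
  refine eq_squareWave_of_mem_Ioo_max_min hT hut (j := j) ⟨?_, ?_⟩
  · by_contra hle
    exact hout j (by omega) ⟨(min_le_left _ _).trans hj, not_lt.1 hle⟩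
  · by_contra hle
    exact hout (j + 1) hjK ⟨by push_cast; exact not_lt.1 hle,
      hj₁.le.trans (by push_cast; exact le_max_left _ _)⟩

end Gap

/-- `2Kη ≤ T` keeps the windows `uIcc (j * T) (ts j)`, `j ≤ K`, pairwise disjoint. -/
structure IsSwitchingPerturbation (T η : ℝ) (K : ℕ) (ts : ℕ → ℝ) : Prop where
  pos : 0 < T
  mono : Monotone ts
  abs_sub_le : ∀ j ≤ K, |ts j - j * T| ≤ j * η
  two_mul_le : 2 * K * η ≤ T

namespace IsSwitchingPerturbation

open MeasureTheory

variable {T η S c m : ℝ} {K j : ℕ} {ts : ℕ → ℝ} {ut V Vt : ℝ → ℝ} {t x : ℝ}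

theorem zero (h : IsSwitchingPerturbation T η K ts) : ts 0 = 0 := by
  simpa using h.abs_sub_le 0 K.zero_le

theorem nonneg (h : IsSwitchingPerturbation T η K ts) (j : ℕ) : 0 ≤ ts j :=
  h.zero ▸ h.mono j.zero_le

theorem eta_nonneg (h : IsSwitchingPerturbation T η K ts) (hK : 0 < K) : 0 ≤ η := by
  have := (abs_nonneg _).trans (h.abs_sub_le K le_rfl)
  exact nonneg_of_mul_nonneg_right this (by exact_mod_cast hK)

theorem max_sub_min_le (h : IsSwitchingPerturbation T η K ts) (hj : j ≤ K) :
    max (j * T) (ts j) - min (j * T) (ts j) ≤ j * η := by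
  rw [max_sub_min_eq_abs]
  exact h.abs_sub_le j hj

theorem max_le_min_succ (h : IsSwitchingPerturbation T η K ts) (hj : j + 1 ≤ K) :
    max (j * T) (ts j) ≤ min ((j + 1) * T) (ts (j + 1)) := by
  have hj' := abs_le.1 (h.abs_sub_le j (by omega))
  have hj₁ := abs_le.1 (h.abs_sub_le (j + 1) hj)
  have hη := h.eta_nonneg (by omega)
  have hjK : (j : ℝ) + 1 ≤ K := by exact_mod_cast hj
  have := h.two_mul_le
  push_cast at hj₁
  exact max_le (le_min (by nlinarith [h.pos]) (by nlinarith))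
    (le_min (by nlinarith) (h.mono j.le_succ))

theorem isSwitchFree_of_mem_Ioo_min_max (h : IsSwitchingPerturbation T η K ts) (hj : j ≤ K)
    (hx : x ∈ Ioo (min (j * T) (ts j)) (max (j * T) (ts j))) (hxK : x < ts K) :
    IsSwitchFree T ts x := by
  obtain ⟨i, rfl⟩ : ∃ i, j = i + 1 := Nat.exists_eq_add_one.2 <| Nat.pos_of_ne_zero fun hj0 => by
    subst hj0; simp [h.zero] at hx
  have hprev := h.max_le_min_succ (j := i) hj
  have hdev := abs_le.1 (h.abs_sub_le (i + 1) hj)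
  have hηT : ((i : ℝ) + 1) * η < T := by
    have hiK : (i : ℝ) + 1 ≤ K := by exact_mod_cast hj
    nlinarith [h.pos, h.two_mul_le, h.eta_nonneg (by omega)]
  push_cast at hx hdev
  rcases le_total (((i : ℝ) + 1) * T) (ts (i + 1)) with hle | hle
  · rw [min_eq_left hle, max_eq_right hle] at hx
    refine ⟨ne_intCast_mul_of_lt_of_lt h.pos (k := i + 1) (by push_cast; linarith [hx.1])
      (by push_cast; linarith [hx.2]), h.mono.ne_of_lt_of_lt_succ (j := i) ?_ hx.2⟩
    linarith [le_max_right (i * T) (ts i), min_le_left (((i : ℝ) + 1) * T) (ts (i + 1)), hx.1]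
  · rw [min_eq_right hle, max_eq_left hle] at hx
    refine ⟨ne_intCast_mul_of_lt_of_lt h.pos (k := i) (by push_cast; linarith [hx.1])
      (by push_cast; linarith [hx.2]), h.mono.ne_of_lt_of_lt_succ (j := i + 1) hx.1 ?_⟩
    show x < ts (i + 1 + 1)
    rcases Nat.lt_or_ge (i + 1) K with hiK | hiK
    · have hnext := h.max_le_min_succ (j := i + 1) hiK
      push_cast at hnext
      linarith [le_max_left (((i : ℝ) + 1) * T) (ts (i + 1)),
        min_le_right (((i : ℝ) + 1 + 1) * T) (ts (i + 1 + 1)), hx.2]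
    · have hK : K = i + 1 := by omega
      subst hK
      linarith [hx.1]

theorem abs_sub_squareWave_le_two (h : IsSwitchingPerturbation T η K ts)
    (hut : IsAlternatingSignal ts ut) (ht₀ : 0 ≤ t)
    (ht : t < ts K) : |ut t - squareWave T t| ≤ 2 := by
  obtain ⟨j, -, hj⟩ := h.mono.exists_mem_Ico_succ (h.zero.symm ▸ ht₀) ht
  calc |ut t - squareWave T t| ≤ |ut t| + |squareWave T t| := abs_sub _ _
    _ = 2 := by rw [hut j t hj, abs_squareWave, abs_pow, abs_neg, abs_one, one_pow]; norm_num

theorem abs_sub_squareWave_le_sum_indicator (h : IsSwitchingPerturbation T η K ts)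
    (hut : IsAlternatingSignal ts ut) (ht₀ : 0 ≤ t)
    (htK : t < K * T) (hts : t < ts K) :
    |ut t - squareWave T t| ≤
      ∑ j ∈ Finset.range (K + 1), (uIcc (j * T) (ts j)).indicator (fun _ => (2 : ℝ)) t := by
  have hnonneg : ∀ j ∈ Finset.range (K + 1),
      0 ≤ (uIcc (j * T) (ts j)).indicator (fun _ => (2 : ℝ)) t :=
    fun _ _ => indicator_nonneg (fun _ _ => zero_le_two) t
  by_cases hbad : ∃ j ≤ K, t ∈ uIcc (j * T) (ts j)
  · obtain ⟨j, hj, hmem⟩ := hbad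
    calc |ut t - squareWave T t| ≤ 2 := abs_sub_squareWave_le_two h hut ht₀ hts
      _ = (uIcc (j * T) (ts j)).indicator (fun _ => (2 : ℝ)) t :=
          (indicator_of_mem hmem (fun _ => (2 : ℝ))).symm
      _ ≤ _ := Finset.single_le_sum hnonneg (Finset.mem_range.2 (Nat.lt_succ_of_le hj))
  · simp only [not_exists, not_and] at hbad
    rw [eq_squareWave_of_forall_notMem_uIcc h.pos hut ht₀ htK hbad, sub_self, abs_zero]
    exact Finset.sum_nonneg hnonneg

theorem integral_abs_sub_squareWave_le (h : IsSwitchingPerturbation T η K ts)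
    (hut : IsAlternatingSignal ts ut) (hS : 0 ≤ S)
    (hSK : S < K * T) (hSts : S < ts K) :
    ∫ t in (0 : ℝ)..S, |ut t - squareWave T t| ≤ 2 * K ^ 2 * η := by
  have hint : ∀ j : ℕ, Integrable ((uIcc (j * T) (ts j)).indicator fun _ => (2 : ℝ))
      (volume.restrict (Ioc 0 S)) :=
    fun j => (integrableOn_const (C := (2 : ℝ)) measure_Ioc_lt_top.ne).indicator measurableSet_uIcc
  have hterm : ∀ j ≤ K,
      ∫ t in Ioc 0 S, (uIcc (j * T) (ts j)).indicator (fun _ => (2 : ℝ)) t ≤ 2 * (j * η) := by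
    intro j hj
    rw [integral_indicator_const _ measurableSet_uIcc,
      measureReal_restrict_apply measurableSet_uIcc, smul_eq_mul, mul_comm]
    gcongr
    calc volume.real (uIcc (j * T) (ts j) ∩ Ioc 0 S) ≤ volume.real (uIcc (j * T) (ts j)) :=
          measureReal_mono inter_subset_left isCompact_uIcc.measure_lt_top.ne
      _ ≤ j * η := by rw [volume_real_interval]; exact h.abs_sub_le j hj
  rw [intervalIntegral.integral_of_le hS]
  calc ∫ t in Ioc 0 S, |ut t - squareWave T t|
      ≤ ∫ t in Ioc 0 S, ∑ j ∈ Finset.range (K + 1),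
          (uIcc (j * T) (ts j)).indicator (fun _ => (2 : ℝ)) t :=
        integral_mono_of_nonneg (.of_forall fun _ => abs_nonneg _)
          (integrable_finsetSum _ fun j _ => hint j)
          ((ae_restrict_mem measurableSet_Ioc).mono fun t ht =>
            abs_sub_squareWave_le_sum_indicator h hut ht.1.le (ht.2.trans_lt hSK)
              (ht.2.trans_lt hSts))
    _ = ∑ j ∈ Finset.range (K + 1),
          ∫ t in Ioc 0 S, (uIcc (j * T) (ts j)).indicator (fun _ => (2 : ℝ)) t :=
        integral_finsetSum _ fun j _ => hint j
    _ ≤ ∑ j ∈ Finset.range (K + 1), 2 * (j * η) :=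
        Finset.sum_le_sum fun j hj => hterm j (Nat.lt_succ_iff.1 (Finset.mem_range.1 hj))
    _ = ∑ i ∈ Finset.range K, 2 * ((i + 1 : ℕ) * η) := by simp [Finset.sum_range_succ']
    _ ≤ ∑ i ∈ Finset.range K, 2 * (K * η) := Finset.sum_le_sum fun i hi => by
        have hiK := Finset.mem_range.1 hi
        gcongr
        · exact h.eta_nonneg (by omega)
        · exact_mod_cast hiK
    _ = 2 * K ^ 2 * η := by rw [Finset.sum_const, Finset.card_range, nsmul_eq_mul]; ring

theorem le_mul_sq_of_gap_of_window (h : IsSwitchingPerturbation T η K ts) {φ : ℝ → ℝ}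
    (hc : 0 ≤ c) (hSts : S < ts K) (h₀ : φ 0 = 0)
    (hgap : ∀ j, j + 1 ≤ K → ∀ a b, 0 ≤ a → a ≤ b → b ≤ S → max (j * T) (ts j) ≤ a →
      b ≤ min ((j + 1) * T) (ts (j + 1)) → φ b ≤ φ a)
    (hwindow : ∀ j ≤ K, ∀ a b, 0 ≤ a → a ≤ b → b ≤ S → min (j * T) (ts j) ≤ a →
      b ≤ max (j * T) (ts j) → φ b ≤ φ a + c * (b - a)) :
    ∀ t ∈ Icc 0 S, φ t ≤ c * K ^ 2 * η := by
  intro t ht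
  have hK : 0 < K := Nat.pos_of_ne_zero fun hK => by
    subst hK; linarith [ht.1, ht.2, h.zero]
  have hcKη : 0 ≤ c * (K * η) := mul_nonneg hc (mul_nonneg K.cast_nonneg (h.eta_nonneg hK))
  have hmax₀ : ∀ j : ℕ, 0 ≤ max (j * T) (ts j) := fun j => (h.nonneg j).trans (le_max_right _ _)
  have step : ∀ j, j + 1 ≤ K → ∀ s ∈ Icc 0 S, max (j * T) (ts j) ≤ s →
      s ≤ max ((j + 1 : ℕ) * T) (ts (j + 1)) → φ s ≤ φ (max (j * T) (ts j)) + c * (K * η) := by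
    intro j hj s hs hjs hsj
    have hle := h.max_le_min_succ hj
    rcases le_total s (min ((j + 1) * T) (ts (j + 1))) with hs' | hs'
    · linarith [hgap j hj _ s (hmax₀ j) hjs hs.2 le_rfl hs']
    · have hgap' := hgap j hj _ _ (hmax₀ j) hle (hs'.trans hs.2) le_rfl le_rfl
      have hwindow' := hwindow (j + 1) hj _ s ((hmax₀ j).trans hle) hs' hs.2
        (by push_cast; exact le_rfl) hsj
      have hwidth : s - min ((j + 1) * T) (ts (j + 1)) ≤ K * η := by
        have := h.max_sub_min_le hj
        have hjK : ((j + 1 : ℕ) : ℝ) ≤ K := by exact_mod_cast hj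
        push_cast at this hsj hjK
        nlinarith [h.eta_nonneg hK]
      nlinarith [mul_le_mul_of_nonneg_left hwidth hc]
  have chain : ∀ j ≤ K, ∀ s ∈ Icc 0 S, s ≤ max (j * T) (ts j) → φ s ≤ c * (K * η) * j := by
    intro j
    induction j with
    | zero =>
      intro _ s hs hs0
      have : s = 0 := le_antisymm (by simpa [h.zero] using hs0) hs.1
      simp [this, h₀]
    | succ j ih =>
      intro hj s hs hsj
      push_cast
      rcases le_total s (max (j * T) (ts j)) with hs' | hs'
      · nlinarith [ih (by omega) s hs hs']
      · linarith [step j hj s hs hs' hsj,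
          ih (by omega) _ ⟨hmax₀ j, hs'.trans hs.2⟩ le_rfl]
  calc φ t ≤ c * (K * η) * K := chain K le_rfl t ht (ht.2.trans (hSts.le.trans (le_max_right _ _)))
    _ = c * K ^ 2 * η := by ring

theorem abs_sub_le_four_mul_sq (h : IsSwitchingPerturbation T η K ts)
    (hut : IsAlternatingSignal ts ut) (hm : 0 ≤ m)
    (hSts : S < ts K) (hV : ContinuousOn V (Icc 0 S)) (hVt : ContinuousOn Vt (Icc 0 S))
    (hV' : ∀ t ∈ Ioo (0 : ℝ) S, (∀ n : ℤ, t ≠ n * T) →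
      HasDerivAt V (2 * (squareWave T t - m * sinh (V t))) t)
    (hVt' : ∀ t ∈ Ioo (0 : ℝ) S, (∀ j : ℕ, t ≠ ts j) →
      HasDerivAt Vt (2 * (ut t - m * sinh (Vt t))) t)
    (h₀ : V 0 = Vt 0) :
    ∀ t ∈ Icc 0 S, |Vt t - V t| ≤ 4 * K ^ 2 * η := by
  have piece : ∀ {a b d : ℝ}, 0 ≤ a → a ≤ b → b ≤ S → 0 ≤ d →
      (∀ x ∈ Ioo a b, IsSwitchFree T ts x ∧ |ut x - squareWave T x| ≤ d) →
      |Vt b - V b| ≤ |Vt a - V a| + 2 * d * (b - a) := by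
    intro a b d ha hab hb hd hx
    have hsub : Ioo a b ⊆ Ioo 0 S := Ioo_subset_Ioo ha hb
    exact abs_sub_le_of_hasDerivAt_sinh hm hd hab (hVt.mono (Icc_subset_Icc ha hb))
      (hV.mono (Icc_subset_Icc ha hb)) (fun x hx' => hVt' x (hsub hx') (hx x hx').1.2)
      (fun x hx' => hV' x (hsub hx') (hx x hx').1.1) fun x hx' => (hx x hx').2
  refine h.le_mul_sq_of_gap_of_window (φ := fun t => |Vt t - V t|) zero_le_four hSts
    (by simp [h₀]) ?_ ?_
  · intro j _ a b ha hab hb hja hbj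
    refine (piece ha hab hb le_rfl fun x hx => ?_).trans_eq (by ring)
    have hx' : x ∈ Ioo (max (j * T) (ts j)) (min ((j + 1) * T) (ts (j + 1))) :=
      ⟨hja.trans_lt hx.1, hx.2.trans_le hbj⟩
    refine ⟨isSwitchFree_of_mem_Ioo_max_min h.pos h.mono hx', ?_⟩
    rw [eq_squareWave_of_mem_Ioo_max_min h.pos hut hx', sub_self, abs_zero]
  · intro j hj a b ha hab hb hja hbj
    refine (piece ha hab hb zero_le_two fun x hx => ⟨?_, ?_⟩).trans_eq (by ring)
    · exact h.isSwitchFree_of_mem_Ioo_min_max hj ⟨hja.trans_lt hx.1, hx.2.trans_le hbj⟩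
        ((hx.2.trans_le hb).trans hSts)
    · exact abs_sub_squareWave_le_two h hut (ha.trans hx.1.le) ((hx.2.trans_le hb).trans hSts)

end IsSwitchingPerturbation

theorem exists_nat_eq_floor_add_one {S T : ℝ} (hT : 0 < T) (hS : 0 ≤ S) :
    ∃ K : ℕ, (K : ℝ) = ⌊S / T⌋ + 1 ∧ S < K * T ∧ K * T ≤ S + T := by
  refine ⟨⌊S / T⌋₊ + 1, ?_, ?_, ?_⟩
  · push_cast
    rw [natCast_floor_eq_intCast_floor (div_nonneg hS hT.le)]
  · push_cast
    exact (div_lt_iff₀ hT).1 (Nat.lt_floor_add_one _)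
  · push_cast
    linarith [(le_div_iff₀ hT).1 (Nat.floor_le (div_nonneg hS hT.le))]

theorem statement19 (m T S : ℝ) (hm : 0 < m) (hT : 0 < T) (hS : 0 < S) :
    ∃ C : ℝ, ∃ η₀ : ℝ, 0 < η₀ ∧ ∀ η : ℝ, 0 < η → η ≤ η₀ →
      ∀ (ut : ℝ → ℝ) (ts : ℕ → ℝ),
        ts 0 = 0 → StrictMono ts →
        (∀ j : ℕ, ∀ t ∈ Set.Ico (ts j) (ts (j + 1)), ut t = (-1 : ℝ) ^ j) →
        (∀ j : ℕ, (j : ℝ) * T ≤ S + T → |ts j - (j : ℝ) * T| ≤ (j : ℝ) * η) →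
        ∀ V Vt : ℝ → ℝ,
          ContinuousOn V (Set.Icc 0 S) → ContinuousOn Vt (Set.Icc 0 S) →
          (∀ t ∈ Set.Ioo (0:ℝ) S, (∀ n : ℤ, t ≠ n * T) →
            HasDerivAt V (2 * (squareWave T t - m * Real.sinh (V t))) t) →
          (∀ t ∈ Set.Ioo (0:ℝ) S, (∀ j : ℕ, t ≠ ts j) →
            HasDerivAt Vt (2 * (ut t - m * Real.sinh (Vt t))) t) →
          V 0 = Vt 0 →
          V 0 ∈ Set.Icc (-Real.arsinh (1 / m)) (Real.arsinh (1 / m)) →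
          (∫ t in (0:ℝ)..S, |ut t - squareWave T t|) ≤
              2 * ((⌊S / T⌋ : ℝ) + 1) ^ 2 * η ∧
          ∀ t ∈ Set.Icc (0:ℝ) S, |Vt t - V t| ≤ C * η := by
  obtain ⟨K, hK, hSK, hKS⟩ := exists_nat_eq_floor_add_one hT hS.le
  have hKpos : (0 : ℝ) < K := pos_of_mul_pos_left (hS.trans hSK) hT.le
  -- `4Kη ≤ T` separates the windows and `4Kη ≤ KT - S` pushes `ts K` beyond `S`.
  refine ⟨4 * K ^ 2, min (K * T - S) T / (4 * K),
    div_pos (lt_min (by linarith) hT) (by positivity), ?_⟩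
  intro η hη hηle ut ts _ hts hut hclose V Vt hV hVt hV' hVt' h₀ _
  have hKη : 4 * K * η ≤ min (K * T - S) T := by
    rw [le_div_iff₀ (by positivity)] at hηle; linarith
  have h : IsSwitchingPerturbation T η K ts :=
    ⟨hT, hts.monotone, fun j hj => hclose j (by nlinarith [(Nat.cast_le (α := ℝ)).2 hj]),
      by linarith [min_le_right (K * T - S) T]⟩
  have hSts : S < ts K := by
    linarith [(abs_le.1 (h.abs_sub_le K le_rfl)).1, min_le_left (K * T - S) T, mul_pos hKpos hη]
  rw [← hK]
  exact ⟨h.integral_abs_sub_squareWave_le hut hS.le hSK hSts,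
    h.abs_sub_le_four_mul_sq hut hm.le hSts hV hVt hV' hVt' h₀⟩
end
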